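/- arXiv:2307.15185 — 7 statements merged into one kernel-verified Lean document; each statement's English description precedes it below -/
import Mathlib

section
/- Let r ≥ 1 be an integer and λ ∈ ℂ with λ ≠ 0, and let J be the r×r Jordan block with eigenvalue λ, i.e. J_{ii} = λ for all i, J_{i,i+1} = 1 for all i < r, and all other entries 0. Then the matrices ((r−1)!/(n^{r−1} λ^{n−r+1})) · J^n converge, as n → ∞, to the r×r matrix whose only nonzero entry is a 1 in position (1, r) (the matrix e_1 e_rᵀ). -/
/-!
Write `J = λ • 1 + N` with `N` the nilpotent shift; since the two summands commute, the binomial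
theorem gives `(J ^ n) i j = C(n, j - i) λ ^ (n - (j - i))` for `i ≤ j` and `0` otherwise. As
`C(n, k) ~ n ^ k / k!`, dividing by `n ^ (r - 1) λ ^ (n - r + 1) / (r - 1)!` kills every entry
except the corner one, where `j - i = r - 1`, and that one tends to `1`.
-/

open Filter Topology Finset Nat

namespace Matrix

variable {R : Type*} [CommSemiring R] {r : ℕ}

variable (R r) in
def shiftMatrix : Matrix (Fin r) (Fin r) R :=
  of fun i j => if (j : ℕ) = i + 1 then 1 else 0

theorem shiftMatrix_apply (i j : Fin r) :
    shiftMatrix R r i j = if (j : ℕ) = i + 1 then 1 else 0 := rfl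

theorem shiftMatrix_pow_apply (m : ℕ) (a b : Fin r) :
    (shiftMatrix R r ^ m) a b = if (b : ℕ) = a + m then 1 else 0 := by
  induction m generalizing b with
  | zero => simp [one_apply, Fin.ext_iff, eq_comm]
  | succ m ih =>
    simp only [pow_succ, mul_apply, ih, shiftMatrix_apply, mul_ite, mul_one, mul_zero]
    by_cases h : (a : ℕ) + m < r
    · rw [Finset.sum_eq_single ⟨a + m, h⟩ (fun l _ hl => by simp [Fin.ext_iff] at hl; simp [hl])
        (by simp)]
      simp [add_assoc]
    · refine (Finset.sum_eq_zero fun l _ => ?_).trans (if_neg (by omega)).symm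
      simp [show (l : ℕ) ≠ a + m by omega]

theorem smul_one_add_shiftMatrix_pow_apply (lam : R) (n : ℕ) (i j : Fin r) :
    ((lam • 1 + shiftMatrix R r) ^ n) i j =
      if i ≤ j then n.choose (j - i) * lam ^ (n - (j - i)) else 0 := by
  rw [add_comm, ((Commute.one_right _).smul_right lam).add_pow, sum_apply]
  simp only [smul_pow, one_pow, mul_smul_comm, mul_one, ← nsmul_eq_mul', smul_apply,
    shiftMatrix_pow_apply, smul_eq_mul, mul_ite, mul_one, mul_zero, nsmul_eq_mul]
  split_ifs with hij
  · rw [sum_eq_single (j - i : ℕ) (fun m _ hm => if_neg (by omega)) fun hm => ?_, if_pos (by omega),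
      mul_comm]
    rw [choose_eq_zero_of_lt (by simp at hm; omega)]
    simp
  · exact sum_eq_zero fun m _ => if_neg (by omega)

end Matrix

section Asymptotics

variable {𝕜 : Type*} [Field 𝕜] [CharZero 𝕜] [TopologicalSpace 𝕜] [IsTopologicalRing 𝕜]
  [ContinuousSMul ℚ≥0 𝕜]

theorem tendsto_descFactorial_div_pow (k : ℕ) :
    Tendsto (fun n : ℕ => (n.descFactorial k : 𝕜) / (n : 𝕜) ^ k) atTop (𝓝 1) := by
  have hfactor (i : ℕ) : Tendsto (fun n : ℕ => 1 - (i : 𝕜) * (n : 𝕜)⁻¹) atTop (𝓝 1) := by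
    simpa using tendsto_const_nhds.sub
      (tendsto_const_nhds.mul (tendsto_inv_atTop_nhds_zero_nat (𝕜 := 𝕜)))
  have hprod := tendsto_finsetProd (range k) fun i _ => hfactor i
  rw [prod_const_one] at hprod
  refine hprod.congr' ?_
  filter_upwards [eventually_ge_atTop k, eventually_ne_atTop 0] with n hkn hn
  calc ∏ i ∈ range k, (1 - (i : 𝕜) * (n : 𝕜)⁻¹)
      = ∏ i ∈ range k, ((n - i : ℕ) : 𝕜) / n := prod_congr rfl fun i hi => by
        rw [Nat.cast_sub (by simp at hi; omega)]
        field_simp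
    _ = (n.descFactorial k : 𝕜) / (n : 𝕜) ^ k := by
        rw [prod_div_distrib, prod_const, card_range, ← Nat.cast_prod, descFactorial_eq_prod_range]

theorem tendsto_choose_div_pow_self (k : ℕ) :
    Tendsto (fun n : ℕ => (n.choose k : 𝕜) / (n : 𝕜) ^ k) atTop (𝓝 (k ! : 𝕜)⁻¹) := by
  refine (by simpa using (tendsto_descFactorial_div_pow k).const_mul (k ! : 𝕜)⁻¹ :
    Tendsto _ atTop _).congr fun n => ?_
  rw [descFactorial_eq_factorial_mul_choose, Nat.cast_mul, mul_div_assoc,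
    inv_mul_cancel_left₀ (Nat.cast_ne_zero.2 k.factorial_ne_zero)]

theorem tendsto_choose_div_pow_of_lt {k m : ℕ} (hkm : k < m) :
    Tendsto (fun n : ℕ => (n.choose k : 𝕜) / (n : 𝕜) ^ m) atTop (𝓝 0) := by
  have h := (tendsto_choose_div_pow_self (𝕜 := 𝕜) k).mul
    ((tendsto_inv_atTop_nhds_zero_nat (𝕜 := 𝕜)).pow (m - k))
  rw [zero_pow (by omega), mul_zero] at h
  refine h.congr' ?_
  filter_upwards [eventually_ne_atTop 0] with n hn
  rw [div_mul_eq_mul_div, inv_pow, ← div_eq_mul_inv, div_div, ← pow_add, Nat.sub_add_cancel hkm.le]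

theorem tendsto_factorial_div_pow_mul_zpow_mul_choose_mul_pow {k m : ℕ} (hkm : k ≤ m) {lam : 𝕜}
    (hlam : lam ≠ 0) :
    Tendsto (fun n : ℕ => (m ! : 𝕜) / ((n : 𝕜) ^ m * lam ^ ((n : ℤ) - m)) *
      (n.choose k * lam ^ (n - k))) atTop (𝓝 (if k = m then 1 else 0)) := by
  have hpow : ∀ n ≥ k, lam ^ (n - k) = lam ^ ((n : ℤ) - m) * lam ^ (m - k) := fun n hn => by
    rw [← zpow_natCast, ← zpow_natCast, ← zpow_add₀ hlam]
    congr 1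
    omega
  have hlim : Tendsto (fun n : ℕ => (m ! : 𝕜) * ((n.choose k : 𝕜) / (n : 𝕜) ^ m) * lam ^ (m - k))
      atTop (𝓝 (if k = m then 1 else 0)) := by
    rcases hkm.eq_or_lt with rfl | hlt
    · simpa [mul_inv_cancel₀ ((Nat.cast_ne_zero (R := 𝕜)).2 k.factorial_ne_zero)] using
        (tendsto_choose_div_pow_self (𝕜 := 𝕜) k).const_mul (k ! : 𝕜)
    · simpa [hlt.ne] using
        ((tendsto_choose_div_pow_of_lt (𝕜 := 𝕜) hlt).const_mul (m ! : 𝕜)).mul_const (lam ^ (m - k))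
  refine hlim.congr' ?_
  filter_upwards [eventually_ge_atTop k] with n hn
  rw [hpow n hn]
  have := zpow_ne_zero ((n : ℤ) - m) hlam
  field_simp

end Asymptotics

/-- for an `r × r` Jordan block `J` with eigenvalue `λ ≠ 0`,
`((r-1)! / (n^{r-1} λ^{n-r+1})) • J^n` converges to the matrix `e₁ eᵣᵀ`. -/
theorem stmt5 {r : ℕ} (hr : 1 ≤ r) (lam : ℂ) (hlam : lam ≠ 0)
    (J : Matrix (Fin r) (Fin r) ℂ)
    (hJ : ∀ i j : Fin r,
      J i j = if i = j then lam else if (j : ℕ) = (i : ℕ) + 1 then 1 else 0) :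
    Tendsto
      (fun n : ℕ =>
        (((Nat.factorial (r - 1) : ℂ)) / ((n : ℂ) ^ (r - 1) * lam ^ ((n : ℤ) - r + 1))) • J ^ n)
      atTop
      (𝓝 (Matrix.single (⟨0, by omega⟩ : Fin r) (⟨r - 1, by omega⟩ : Fin r) 1)) := by
  obtain rfl : J = lam • 1 + Matrix.shiftMatrix ℂ r := by
    ext i j
    rw [hJ, Matrix.add_apply, Matrix.smul_apply, Matrix.one_apply, Matrix.shiftMatrix_apply]
    split_ifs <;> simp_all
  have hexp (n : ℕ) : (n : ℤ) - r + 1 = n - (r - 1 : ℕ) := by omega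
  refine tendsto_pi_nhds.2 fun i => tendsto_pi_nhds.2 fun j => ?_
  simp only [Matrix.smul_apply, smul_eq_mul, Matrix.smul_one_add_shiftMatrix_pow_apply, hexp]
  by_cases hij : i ≤ j
  · have htarget : Matrix.single (⟨0, by omega⟩ : Fin r) ⟨r - 1, by omega⟩ (1 : ℂ) i j =
        if (j - i : ℕ) = r - 1 then 1 else 0 := by
      simp only [Matrix.single_apply, Fin.ext_iff]
      congr 1
      simp only [eq_iff_iff]
      omega
    simpa only [if_pos hij, htarget] using
      tendsto_factorial_div_pow_mul_zpow_mul_choose_mul_pow (k := j - i) (by omega) hlam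
  · have htarget : Matrix.single (⟨0, by omega⟩ : Fin r) ⟨r - 1, by omega⟩ (1 : ℂ) i j = 0 :=
      Matrix.single_apply_of_ne _ _ _ _ _ (by simp only [Fin.ext_iff]; omega)
    simpa only [if_neg hij, mul_zero, htarget] using tendsto_const_nhds
end

section
/- Let M be a d×d complex matrix and ρ > 0 a real number such that ρ is an eigenvalue of M and every eigenvalue λ ≠ ρ of M satisfies |λ| < ρ. Let r ≥ 1 be the multiplicity of ρ as a root of the minimal polynomial of M (equivalently, the size of the largest Jordan block of M for the eigenvalue ρ). Then the matrices ((r−1)!/(n^{r−1} ρ^{n−r+1})) · M^n converge as n → ∞ to a nonzero matrix P satisfying M P = P M = ρ P. -/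
/-!
Write the minimal polynomial of `M` as `(X - ρ) ^ r * q` with `q(ρ) ≠ 0`. A Bézout identity for
these coprime factors yields a polynomial `E` in `M` (the spectral projection onto the generalized
`ρ`-eigenspace) with `(M - ρ) ^ r * E = 0` and `q(M) * (1 - E) = 0`.
On the range of `E`, the binomial expansion of `M ^ n = (ρ + N) ^ n`, where `N = M - ρ`, has only
`r` terms; after scaling by `(r-1)! / (n ^ (r-1) ρ ^ (n-r+1))` only the top one survives, giving
the limit `P = N ^ (r-1) * E`; it is nonzero because `(X - ρ) ^ (r-1) * q` does not annihilate `M`.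
On the range of `1 - E`, the roots of `q` are the other eigenvalues, so `‖M ^ n * (1 - E)‖` grows
at most like `n ^ L * ρ' ^ n` for some `ρ' < ρ`, and the scaled powers tend to zero.
-/

open Filter Topology Polynomial Asymptotics Finset
open scoped Nat

section Decomposition

variable {R A : Type*} [CommRing R] [Ring A] [Algebra R A]

theorem commute_aeval_self (a : A) (p : R[X]) : Commute a (aeval a p) := by
  simpa using (commute_X p).map (aeval a)

theorem exists_commute_aeval_mul_eq_zero_of_isCoprime {a : A} {f g : R[X]}
    (hfg : IsCoprime f g) (h : aeval a (f * g) = 0) :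
    ∃ e : A, Commute a e ∧ aeval a f * e = 0 ∧ aeval a g * (1 - e) = 0 := by
  obtain ⟨u, v, huv⟩ := hfg
  refine ⟨aeval a (v * g), commute_aeval_self a _, ?_, ?_⟩
  · rw [← map_mul, show f * (v * g) = v * (f * g) by ring, map_mul, h, mul_zero]
  · rw [← map_one (aeval (R := R) a), ← map_sub, ← huv, add_sub_cancel_right, ← map_mul,
      show g * (u * f) = u * (f * g) by ring, map_mul, h, mul_zero]

theorem mul_sub_algebraMap_pow_mul_eq_smul {a x : A} {ρ : R} {k : ℕ}
    (hx : (a - algebraMap R A ρ) ^ (k + 1) * x = 0) :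
    a * ((a - algebraMap R A ρ) ^ k * x) = ρ • ((a - algebraMap R A ρ) ^ k * x) := by
  calc a * ((a - algebraMap R A ρ) ^ k * x)
      = (a - algebraMap R A ρ + algebraMap R A ρ) * ((a - algebraMap R A ρ) ^ k * x) := by
        rw [sub_add_cancel]
    _ = (a - algebraMap R A ρ) ^ (k + 1) * x + ρ • ((a - algebraMap R A ρ) ^ k * x) := by
        rw [add_mul, pow_succ', mul_assoc, Algebra.smul_def]
    _ = ρ • ((a - algebraMap R A ρ) ^ k * x) := by rw [hx, zero_add]

variable {K : Type*} [Field K] [Algebra K A]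

theorem exists_spectralProjection {a : A} (ha : IsIntegral K a)
    {ρ : K} {r : ℕ} (hr : r = rootMultiplicity ρ (minpoly K a)) (hr1 : 1 ≤ r) :
    ∃ e : A, Commute a e ∧ (a - algebraMap K A ρ) ^ r * e = 0 ∧
      (a - algebraMap K A ρ) ^ (r - 1) * e ≠ 0 ∧
      ∃ q : K[X], q ≠ 0 ∧ (∀ μ ∈ q.roots, (minpoly K a).IsRoot μ ∧ μ ≠ ρ) ∧
        aeval a q * (1 - e) = 0 := by
  subst hr
  set r := rootMultiplicity ρ (minpoly K a)
  set q := minpoly K a /ₘ (X - C ρ) ^ r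
  have hfac : (X - C ρ) ^ r * q = minpoly K a := pow_mul_divByMonic_rootMultiplicity_eq _ ρ
  have hqρ : ¬ X - C ρ ∣ q := by
    rw [dvd_iff_isRoot]
    exact eval_divByMonic_pow_rootMultiplicity_ne_zero ρ (minpoly.ne_zero ha)
  obtain ⟨e, hae, hfe, hqe⟩ := exists_commute_aeval_mul_eq_zero_of_isCoprime
    ((irreducible_X_sub_C ρ).coprime_iff_not_dvd.mpr hqρ).pow_left
    (hfac ▸ minpoly.aeval K a)
  have hq0 : q ≠ 0 := fun h => hqρ (h ▸ dvd_zero _)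
  have hroots : ∀ μ ∈ q.roots, (minpoly K a).IsRoot μ ∧ μ ≠ ρ := fun μ hμ => by
    have hqμ : q.IsRoot μ := (mem_roots hq0).mp hμ
    refine ⟨by rw [IsRoot, ← hfac, eval_mul, hqμ.eq_zero, mul_zero], ?_⟩
    rintro rfl
    exact hqρ (dvd_iff_isRoot.mpr hqμ)
  have hX : aeval a (X - C ρ) = a - algebraMap K A ρ := by simp
  refine ⟨e, hae, by simpa [hX] using hfe, fun h0 => ?_, q, hq0, hroots, hqe⟩
  -- `(X - ρ) ^ (r - 1) * q` would be an annihilating proper divisor of the minimal polynomial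
  have hann : aeval a ((X - C ρ) ^ (r - 1) * q) = 0 := by
    have hq : aeval a q = aeval a q * e := by rwa [mul_sub, mul_one, sub_eq_zero] at hqe
    rw [map_mul, hq, ← mul_assoc, ((Commute.all _ _).map (aeval (R := K) a)).eq, mul_assoc,
      map_pow, hX, h0, mul_zero]
  have hdvd : (X - C ρ) ^ (r - 1) * q * (X - C ρ) ∣ (X - C ρ) ^ (r - 1) * q * 1 := by
    rw [mul_one, mul_right_comm, ← pow_succ, Nat.sub_add_cancel hr1, hfac]
    exact minpoly.dvd K a hann
  exact not_isUnit_X_sub_C ρ (isUnit_of_dvd_one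
    ((mul_dvd_mul_iff_left (mul_ne_zero (pow_ne_zero _ (X_sub_C_ne_zero ρ)) hq0)).mp hdvd))

end Decomposition

section Growth

variable {𝕜 A : Type*} [NormedField 𝕜] [NormedRing A] [NormedAlgebra 𝕜 A]

theorem exists_norm_pow_mul_le_of_sub_algebraMap_mul {a x : A} {μ : 𝕜} {R C₁ : ℝ} {L : ℕ}
    (hR : 0 < R) (hμ : ‖μ‖ ≤ R)
    (h : ∀ n : ℕ, ‖a ^ n * ((a - algebraMap 𝕜 A μ) * x)‖ ≤ C₁ * (n + 1) ^ L * R ^ n) :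
    ∃ C : ℝ, ∀ n : ℕ, ‖a ^ n * x‖ ≤ C * (n + 1) ^ (L + 1) * R ^ n := by
  have hC₁ : 0 ≤ C₁ := by simpa using (norm_nonneg _).trans (h 0)
  refine ⟨‖x‖ + C₁ / R, fun n => ?_⟩
  set C := ‖x‖ + C₁ / R
  have hxC : ‖x‖ ≤ C := le_add_of_nonneg_right (div_nonneg hC₁ hR.le)
  have hC₁C : C₁ ≤ C * R := by
    rw [add_mul, div_mul_cancel₀ _ hR.ne']
    nlinarith [norm_nonneg x]
  have hC : 0 ≤ C := (norm_nonneg x).trans hxC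
  clear_value C
  induction n with
  | zero => simpa using hxC
  | succ n ih =>
    have hμx : a ^ n * (algebraMap 𝕜 A μ * x) = μ • (a ^ n * x) := by
      rw [← mul_assoc, ← Algebra.commutes, mul_assoc, Algebra.smul_def]
    have hsplit : a ^ (n + 1) * x = a ^ n * ((a - algebraMap 𝕜 A μ) * x) + μ • (a ^ n * x) := by
      rw [sub_mul, mul_sub, hμx, sub_add_cancel, ← mul_assoc, ← pow_succ]
    have hpoly : ((n : ℝ) + 1) ^ L + ((n : ℝ) + 1) ^ (L + 1) ≤ ((n : ℝ) + 1 + 1) ^ (L + 1) := by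
      calc ((n : ℝ) + 1) ^ L + ((n : ℝ) + 1) ^ (L + 1)
          = ((n : ℝ) + 1) ^ L * ((n : ℝ) + 1 + 1) := by ring
        _ ≤ ((n : ℝ) + 1 + 1) ^ L * ((n : ℝ) + 1 + 1) := by gcongr; linarith
        _ = ((n : ℝ) + 1 + 1) ^ (L + 1) := by ring
    calc ‖a ^ (n + 1) * x‖
        ≤ C₁ * (n + 1) ^ L * R ^ n + R * (C * (n + 1) ^ (L + 1) * R ^ n) := by
          rw [hsplit]
          refine (norm_add_le _ _).trans (add_le_add (h n) ?_)
          rw [norm_smul]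
          exact mul_le_mul hμ ih (norm_nonneg _) hR.le
      _ ≤ C * R ^ (n + 1) * (((n : ℝ) + 1) ^ L + ((n : ℝ) + 1) ^ (L + 1)) := by
          have hR' := mul_le_mul_of_nonneg_right hC₁C
            (by positivity : (0 : ℝ) ≤ ((n : ℝ) + 1) ^ L * R ^ n)
          linear_combination hR'
      _ ≤ C * ((n + 1 : ℕ) + 1) ^ (L + 1) * R ^ (n + 1) := by
          push_cast
          nlinarith [mul_le_mul_of_nonneg_left hpoly (by positivity : 0 ≤ C * R ^ (n + 1))]

theorem exists_norm_pow_mul_le_of_aeval_prod_mul_eq_zero {a : A} {R : ℝ} (hR : 0 < R)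
    (s : Multiset 𝕜) (hs : ∀ μ ∈ s, ‖μ‖ ≤ R) {x : A}
    (hx : aeval a (s.map fun μ => X - C μ).prod * x = 0) :
    ∃ C : ℝ, ∀ n : ℕ, ‖a ^ n * x‖ ≤ C * (n + 1) ^ Multiset.card s * R ^ n := by
  induction s using Multiset.induction_on generalizing x with
  | empty => exact ⟨0, fun n => by simp_all⟩
  | cons μ s ih =>
    have hsx : aeval a (s.map fun μ => X - C μ).prod * ((a - algebraMap 𝕜 A μ) * x) = 0 := by
      rw [Multiset.map_cons, Multiset.prod_cons, mul_comm, map_mul] at hx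
      simpa [mul_assoc] using hx
    obtain ⟨C₁, hC₁⟩ := ih (fun ν hν => hs ν (Multiset.mem_cons_of_mem hν)) hsx
    simpa using exists_norm_pow_mul_le_of_sub_algebraMap_mul hR
      (hs μ (Multiset.mem_cons_self μ s)) hC₁

end Growth

theorem tendsto_inv_pow_smul_pow_mul_of_aeval_mul_eq_zero {A : Type*} [NormedRing A]
    [NormedAlgebra ℂ A] {a x : A} {q : ℂ[X]} {ρ : ℂ} (hρ : ρ ≠ 0) (hq : q ≠ 0)
    (hroots : ∀ μ ∈ q.roots, ‖μ‖ < ‖ρ‖) (hx : aeval a q * x = 0) :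
    Tendsto (fun n : ℕ => (ρ ^ n)⁻¹ • (a ^ n * x)) atTop (𝓝 0) := by
  have hρ' : 0 < ‖ρ‖ := norm_pos_iff.mpr hρ
  obtain ⟨R, ⟨hR, hRρ⟩, hrootsR⟩ :
      ∃ R : ℝ, R ∈ Set.Ioo 0 ‖ρ‖ ∧ ∀ μ ∈ q.roots.toFinset, ‖μ‖ ≤ R :=
    (Eventually.and (Ioo_mem_nhdsLT hρ') ((eventually_all_finset _).mpr fun μ hμ =>
      Eventually.mono (Ioo_mem_nhdsLT (hroots μ (Multiset.mem_toFinset.mp hμ)))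
        fun _ h => h.1.le)).exists
  have hprod : aeval a (q.roots.map fun μ => X - C μ).prod * x = 0 := by
    rw [(IsAlgClosed.splits q).eq_prod_roots, map_mul, aeval_C, mul_assoc, ← Algebra.smul_def,
      smul_eq_zero] at hx
    exact hx.resolve_left (leadingCoeff_ne_zero.mpr hq)
  obtain ⟨K, hK⟩ := exists_norm_pow_mul_le_of_aeval_prod_mul_eq_zero hR q.roots
    (fun μ hμ => hrootsR μ (Multiset.mem_toFinset.mpr hμ)) hprod
  have ht : Tendsto (fun n : ℕ => K * (((n : ℝ) + 1) ^ Multiset.card q.roots * (R / ‖ρ‖) ^ n))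
      atTop (𝓝 0) := by
    have h := (tendsto_add_atTop_iff_nat 1).mpr (tendsto_pow_const_mul_const_pow_of_lt_one
      (Multiset.card q.roots) (by positivity) ((div_lt_one (hR.trans hRρ)).mpr hRρ))
    simpa using (h.const_mul (K / (R / ‖ρ‖))).congr fun n => by
      push_cast; rw [pow_succ]; field_simp
  refine squeeze_zero_norm (fun n => ?_) ht
  calc ‖(ρ ^ n)⁻¹ • (a ^ n * x)‖ = ‖a ^ n * x‖ / ‖ρ‖ ^ n := by
        rw [norm_smul, norm_inv, norm_pow, inv_mul_eq_div]
    _ ≤ K * (n + 1) ^ Multiset.card q.roots * R ^ n / ‖ρ‖ ^ n := by gcongr; exact hK n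
    _ = K * (((n : ℝ) + 1) ^ Multiset.card q.roots * (R / ‖ρ‖) ^ n) := by rw [div_pow]; ring

theorem tendsto_choose_div_pow {𝕜 : Type*} [RCLike 𝕜] {j k : ℕ} (hjk : j ≤ k) :
    Tendsto (fun n : ℕ => (n.choose j : 𝕜) / (n : 𝕜) ^ k) atTop
      (𝓝 (if j = k then (k ! : 𝕜)⁻¹ else 0)) := by
  have hequiv : (fun n : ℕ => (j ! : ℝ)⁻¹ * ((n : ℝ) ^ (k - j))⁻¹) ~[atTop]
      fun n : ℕ => (n.choose j : ℝ) / (n : ℝ) ^ k := by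
    refine ((isEquivalent_choose j).div IsEquivalent.refl).symm.congr_left ?_
    filter_upwards [eventually_ne_atTop 0] with n hn
    rw [Pi.div_apply, ← Nat.sub_add_cancel hjk, pow_add, Nat.add_sub_cancel]
    field_simp
  have hreal : Tendsto (fun n : ℕ => (n.choose j : ℝ) / (n : ℝ) ^ k) atTop
      (𝓝 (if j = k then (k ! : ℝ)⁻¹ else 0)) := by
    refine hequiv.tendsto_nhds ?_
    split_ifs with hj
    · subst hj
      simp
    · have hpow : Tendsto (fun n : ℕ => ((n : ℝ) ^ (k - j))⁻¹) atTop (𝓝 0) :=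
        ((tendsto_pow_atTop (by omega)).comp tendsto_natCast_atTop_atTop).inv_tendsto_atTop
      simpa using hpow.const_mul (j ! : ℝ)⁻¹
  convert ((RCLike.continuous_ofReal (K := 𝕜)).tendsto _).comp hreal using 1
  · ext n; simp
  · split_ifs <;> simp

theorem div_pow_mul_zpow_sub_eq {𝕜 : Type*} [Field 𝕜] {ρ : 𝕜} (hρ : ρ ≠ 0) (c : 𝕜) (k n : ℕ) :
    c / ((n : 𝕜) ^ k * ρ ^ ((n : ℤ) - k)) = c * ρ ^ k * ((n : 𝕜)⁻¹) ^ k * (ρ ^ n)⁻¹ := by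
  rw [zpow_sub₀ hρ, zpow_natCast, zpow_natCast]
  simp only [div_eq_mul_inv, mul_inv, inv_inv, inv_pow]
  ring

section Binomial

variable {𝕜 A : Type*} [RCLike 𝕜] [NormedRing A] [NormedAlgebra 𝕜 A]

theorem pow_mul_eq_sum_of_sub_pow_mul_eq_zero {a x : A} {ρ : 𝕜} {k n : ℕ} (hkn : k ≤ n)
    (hx : (a - algebraMap 𝕜 A ρ) ^ (k + 1) * x = 0) :
    a ^ n * x = ∑ j ∈ range (k + 1),
      (ρ ^ (n - j) * n.choose j) • ((a - algebraMap 𝕜 A ρ) ^ j * x) := by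
  set N := a - algebraMap 𝕜 A ρ
  have hNx : ∀ j, k + 1 ≤ j → N ^ j * x = 0 := fun j hj => by
    rw [← Nat.sub_add_cancel hj, pow_add, mul_assoc, hx, mul_zero]
  have hterm : ∀ j, N ^ j * algebraMap 𝕜 A ρ ^ (n - j) * (n.choose j : A) * x =
      (ρ ^ (n - j) * n.choose j) • (N ^ j * x) := fun j => by
    rw [← map_pow, ← map_natCast (algebraMap 𝕜 A), ← Algebra.commutes, ← Algebra.commutes,
      ← Algebra.smul_def, ← Algebra.smul_def, smul_smul, smul_mul_assoc, mul_comm (n.choose j : 𝕜)]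
  rw [← sub_add_cancel a (algebraMap 𝕜 A ρ), (Algebra.commute_algebraMap_right ρ N).add_pow,
    sum_mul]
  simp_rw [hterm]
  refine (sum_subset (range_subset_range.mpr (by omega : k + 1 ≤ n + 1)) fun j _ hj => ?_).symm
  rw [mem_range, not_lt] at hj
  rw [hNx j hj, smul_zero]

theorem tendsto_smul_pow_mul_of_sub_pow_mul_eq_zero {a x : A} {ρ : 𝕜} (hρ : ρ ≠ 0) {k : ℕ}
    (hx : (a - algebraMap 𝕜 A ρ) ^ (k + 1) * x = 0) :
    Tendsto (fun n : ℕ => ((k ! : 𝕜) / ((n : 𝕜) ^ k * ρ ^ ((n : ℤ) - k))) • (a ^ n * x)) atTop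
      (𝓝 ((a - algebraMap 𝕜 A ρ) ^ k * x)) := by
  have hcoef : ∀ j ∈ range (k + 1), Tendsto
      (fun n : ℕ => (k ! : 𝕜) / ((n : 𝕜) ^ k * ρ ^ ((n : ℤ) - k)) * (ρ ^ (n - j) * n.choose j))
      atTop (𝓝 (if j = k then 1 else 0)) := by
    intro j hj
    have hjk : j ≤ k := Nat.lt_succ_iff.mp (mem_range.mp hj)
    have hlim := (tendsto_choose_div_pow (𝕜 := 𝕜) hjk).const_mul ((k ! : 𝕜) * ρ ^ k / ρ ^ j)
    rw [show (k ! : 𝕜) * ρ ^ k / ρ ^ j * (if j = k then (k ! : 𝕜)⁻¹ else 0) =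
        if j = k then 1 else 0 by split_ifs with h <;> simp [h, hρ, Nat.factorial_ne_zero]] at hlim
    refine hlim.congr' ?_
    filter_upwards [eventually_ge_atTop j] with n hn
    rw [div_pow_mul_zpow_sub_eq hρ, show ρ ^ n = ρ ^ (n - j) * ρ ^ j by
      rw [← pow_add, Nat.sub_add_cancel hn]]
    field_simp
    ring
  have hlim := tendsto_finsetSum (range (k + 1)) fun j hj =>
    (hcoef j hj).smul_const ((a - algebraMap 𝕜 A ρ) ^ j * x)
  simp only [ite_smul, one_smul, zero_smul, sum_ite_eq', mem_range, lt_add_one, if_true] at hlim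
  refine hlim.congr' ?_
  filter_upwards [eventually_ge_atTop k] with n hn
  simp_rw [pow_mul_eq_sum_of_sub_pow_mul_eq_zero hn hx, smul_sum, smul_smul]

end Binomial

attribute [local instance] Matrix.linftyOpNormedRing Matrix.linftyOpNormedAlgebra

theorem stmt6_general {d : ℕ} (M : Matrix (Fin d) (Fin d) ℂ) (ρ : ℝ) (hρ : 0 < ρ)
    (hmax : ∀ μ : ℂ, M.charpoly.IsRoot μ → μ ≠ (ρ : ℂ) → ‖μ‖ < ρ)
    (r : ℕ) (hr1 : 1 ≤ r)
    (hr : r = Polynomial.rootMultiplicity (ρ : ℂ) (minpoly ℂ M)) :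
    ∃ P : Matrix (Fin d) (Fin d) ℂ, P ≠ 0 ∧ M * P = (ρ : ℂ) • P ∧ P * M = (ρ : ℂ) • P ∧
      Tendsto
        (fun n : ℕ =>
          (((Nat.factorial (r - 1) : ℂ)) / ((n : ℂ) ^ (r - 1) * (ρ : ℂ) ^ ((n : ℤ) - r + 1))) •
            M ^ n)
        atTop (𝓝 P) := by
  obtain ⟨E, hME, hnil, hP0, q, hq0, hroots, hqE⟩ :=
    exists_spectralProjection (Matrix.isIntegral M) hr hr1
  obtain ⟨k, rfl⟩ : ∃ k, r = k + 1 := ⟨r - 1, by omega⟩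
  have hρ0 : (ρ : ℂ) ≠ 0 := by exact_mod_cast hρ.ne'
  have hMP := mul_sub_algebraMap_pow_mul_eq_smul hnil
  have hPM : Commute M ((M - algebraMap ℂ _ ρ) ^ k * E) :=
    (((Commute.refl M).sub_right (Algebra.commute_algebraMap_right _ M)).pow_right k).mul_right hME
  refine ⟨_, hP0, hMP, hPM.eq.symm.trans hMP, ?_⟩
  have hdecay := tendsto_inv_pow_smul_pow_mul_of_aeval_mul_eq_zero hρ0 hq0
    (fun μ hμ => by
      rw [Complex.norm_real, Real.norm_of_nonneg hρ.le]
      exact hmax μ ((hroots μ hμ).1.dvd (Matrix.minpoly_dvd_charpoly M)) (hroots μ hμ).2)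
    hqE
  have hlim := (((tendsto_inv_atTop_nhds_zero_nat.pow k).const_mul
    ((k ! : ℂ) * (ρ : ℂ) ^ k)).smul hdecay).add
    (tendsto_smul_pow_mul_of_sub_pow_mul_eq_zero hρ0 hnil)
  rw [smul_zero, zero_add] at hlim
  refine hlim.congr fun n => ?_
  rw [Nat.add_sub_cancel, show (n : ℤ) - ((k + 1 : ℕ) : ℤ) + 1 = n - k by push_cast; ring,
    div_pow_mul_zpow_sub_eq hρ0, smul_smul, ← smul_add, ← mul_add, sub_add_cancel, mul_one]

/-- if `ρ > 0` is an eigenvalue of the complex matrix `M`, strictly dominating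
all other eigenvalues in modulus, and `r` is the multiplicity of `ρ` as a root of the minimal
polynomial of `M`, then `((r-1)!/(n^{r-1} ρ^{n-r+1})) • M^n` converges to a nonzero matrix `P`
with `M P = P M = ρ P`. -/
theorem stmt6 {d : ℕ} (M : Matrix (Fin d) (Fin d) ℂ) (ρ : ℝ) (hρ : 0 < ρ)
    (heig : M.charpoly.IsRoot (ρ : ℂ))
    (hmax : ∀ μ : ℂ, M.charpoly.IsRoot μ → μ ≠ (ρ : ℂ) → ‖μ‖ < ρ)
    (r : ℕ) (hr1 : 1 ≤ r)
    (hr : r = Polynomial.rootMultiplicity (ρ : ℂ) (minpoly ℂ M)) :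
    ∃ P : Matrix (Fin d) (Fin d) ℂ, P ≠ 0 ∧ M * P = (ρ : ℂ) • P ∧ P * M = (ρ : ℂ) • P ∧
      Tendsto
        (fun n : ℕ =>
          (((Nat.factorial (r - 1) : ℂ)) / ((n : ℂ) ^ (r - 1) * (ρ : ℂ) ^ ((n : ℤ) - r + 1))) •
            M ^ n)
        atTop (𝓝 P) :=
  stmt6_general M ρ hρ hmax r hr1 hr
end

section
/- Let (X, dist) be a compact metric space and (μ_n)_{n∈ℕ} a sequence of Borel probability measures on X. Suppose there is a sequence (ξ_n)_{n∈ℕ} of finite partitions of X into nonempty Borel sets such that: (i) sup_{A ∈ ξ_n} diam(A) → 0 as n → ∞, and (ii) for every n and every A ∈ ξ_n the sequence (μ_m(A))_{m∈ℕ} converges to a limit μ̄(A). Then (μ_n) converges weakly to some Borel probability measure μ on X, and moreover, for every continuous g : X → ℝ and every n ∈ ℕ, |Σ_{A ∈ ξ_n} μ̄(A) · sup_{x∈A} g(x) − ∫ g dμ| ≤ sup_{A ∈ ξ_n} (sup_{x∈A} g(x) − inf_{x∈A} g(x)). -/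
/-!
The partition sums `∑ A ∈ ξ n, μ_m(A) · inf_A g` and `∑ A ∈ ξ n, μ_m(A) · sup_A g` bracket
`∫ g dμ_m`, so passing to the limit along any weak cluster point `ν` of `(μ_m)` (which exists,
the space of probability measures on a compact space being compact) brackets `∫ g dν` between
the same sums with weights `μ̄(A)`. The gap between these sums is at most the largest
oscillation of `g` on a cell, which tends to zero by uniform continuity. Hence all cluster points
have the same integrals, so there is only one, and the sequence converges to it.
-/

open Filter Topology MeasureTheory
open scoped BoundedContinuousFunction

noncomputable def upperSum {X : Type*} (ξ : Finset (Set X)) (w : Set X → ℝ) (g : X → ℝ) : ℝ :=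
  ∑ A ∈ ξ, w A * sSup (g '' A)

noncomputable def lowerSum {X : Type*} (ξ : Finset (Set X)) (w : Set X → ℝ) (g : X → ℝ) : ℝ :=
  ∑ A ∈ ξ, w A * sInf (g '' A)

noncomputable def maxOscillation {X : Type*} (ξ : Finset (Set X)) (g : X → ℝ) : ℝ :=
  sSup ((fun A => sSup (g '' A) - sInf (g '' A)) '' (ξ : Set (Set X)))

theorem Real.sSup_sub_sInf_le_of_forall_dist_le {s : Set ℝ} {ε : ℝ} (hε : 0 ≤ ε)
    (h : ∀ x ∈ s, ∀ y ∈ s, dist x y ≤ ε) : sSup s - sInf s ≤ ε := by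
  rw [← Real.diam_eq (Metric.isBounded_iff.2 ⟨ε, h⟩)]
  exact Metric.diam_le_of_forall_dist_le hε h

section WeightedSums

variable {X : Type*} {ξ : Finset (Set X)} {w : Set X → ℝ} {g : X → ℝ}

theorem upperSum_sub_lowerSum_le (hw₀ : ∀ A ∈ ξ, 0 ≤ w A) (hw₁ : ∑ A ∈ ξ, w A = 1) :
    upperSum ξ w g - lowerSum ξ w g ≤ maxOscillation ξ g := by
  have hle : ∀ A ∈ ξ, sSup (g '' A) - sInf (g '' A) ≤ maxOscillation ξ g := fun A hA =>
    le_csSup (ξ.finite_toSet.image _).bddAbove (Set.mem_image_of_mem _ hA)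
  calc upperSum ξ w g - lowerSum ξ w g = ∑ A ∈ ξ, w A * (sSup (g '' A) - sInf (g '' A)) := by
        simp only [upperSum, lowerSum, ← Finset.sum_sub_distrib, mul_sub]
    _ ≤ ∑ A ∈ ξ, w A * maxOscillation ξ g :=
        Finset.sum_le_sum fun A hA => mul_le_mul_of_nonneg_left (hle A hA) (hw₀ A hA)
    _ = maxOscillation ξ g := by rw [← Finset.sum_mul, hw₁, one_mul]

theorem abs_sub_le_maxOscillation_of_mem_Icc (hw₀ : ∀ A ∈ ξ, 0 ≤ w A)
    (hw₁ : ∑ A ∈ ξ, w A = 1) {a b : ℝ} (ha : a ∈ Set.Icc (lowerSum ξ w g) (upperSum ξ w g))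
    (hb : b ∈ Set.Icc (lowerSum ξ w g) (upperSum ξ w g)) : |a - b| ≤ maxOscillation ξ g :=
  (abs_sub_le_of_le_of_le ha.1 ha.2 hb.1 hb.2).trans (upperSum_sub_lowerSum_le hw₀ hw₁)

theorem UniformContinuous.exists_forall_maxOscillation_le [PseudoMetricSpace X]
    (hg : UniformContinuous g) {ε : ℝ} (hε : 0 < ε) :
    ∃ δ > 0, ∀ ξ : Finset (Set X), (∀ A ∈ ξ, Bornology.IsBounded A ∧ Metric.diam A < δ) →
      maxOscillation ξ g ≤ ε := by
  obtain ⟨δ, hδ, hgδ⟩ := Metric.uniformContinuous_iff.1 hg ε hε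
  refine ⟨δ, hδ, fun ξ hξ => Real.sSup_le ?_ hε.le⟩
  rintro _ ⟨A, hA, rfl⟩
  refine Real.sSup_sub_sInf_le_of_forall_dist_le hε.le ?_
  rintro _ ⟨x, hx, rfl⟩ _ ⟨y, hy, rfl⟩
  exact (hgδ ((Metric.dist_le_diam_of_mem (hξ A hA).1 hx hy).trans_lt (hξ A hA).2)).le

end WeightedSums

section Partition

variable {X : Type*} [MeasurableSpace X] {ξ : Finset (Set X)} {μ : Measure X} {g : X → ℝ}

theorem sum_measureReal_eq_univ_of_partition [IsFiniteMeasure μ] (hmeas : ∀ A ∈ ξ, MeasurableSet A)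
    (hdisj : (ξ : Set (Set X)).PairwiseDisjoint id) (hcover : ⋃₀ (ξ : Set (Set X)) = Set.univ) :
    ∑ A ∈ ξ, μ.real A = μ.real Set.univ := by
  rw [← hcover, Set.sUnion_eq_biUnion]
  exact (measureReal_biUnion_finset hdisj hmeas).symm

theorem integral_eq_sum_setIntegral_of_partition (hmeas : ∀ A ∈ ξ, MeasurableSet A)
    (hdisj : (ξ : Set (Set X)).PairwiseDisjoint id) (hcover : ⋃₀ (ξ : Set (Set X)) = Set.univ)
    (hg : Integrable g μ) : ∫ x, g x ∂μ = ∑ A ∈ ξ, ∫ x in A, g x ∂μ := by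
  have hunion : (⋃ A ∈ ξ, A) = Set.univ := by
    rw [← hcover, Set.sUnion_eq_biUnion]
    rfl
  rw [← integral_biUnion_finset ξ hmeas hdisj fun A _ => hg.integrableOn, hunion,
    Measure.restrict_univ]

theorem integral_le_upperSum [IsFiniteMeasure μ] (hmeas : ∀ A ∈ ξ, MeasurableSet A)
    (hdisj : (ξ : Set (Set X)).PairwiseDisjoint id) (hcover : ⋃₀ (ξ : Set (Set X)) = Set.univ)
    (hg : Integrable g μ) (hbdd : ∀ A ∈ ξ, BddAbove (g '' A)) :
    ∫ x, g x ∂μ ≤ upperSum ξ μ.real g := by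
  rw [integral_eq_sum_setIntegral_of_partition hmeas hdisj hcover hg]
  refine Finset.sum_le_sum fun A hA => ?_
  rw [← smul_eq_mul, ← setIntegral_const]
  exact setIntegral_mono_on hg.integrableOn integrableOn_const (hmeas A hA) fun x hx =>
    le_csSup (hbdd A hA) ⟨x, hx, rfl⟩

theorem lowerSum_le_integral [IsFiniteMeasure μ] (hmeas : ∀ A ∈ ξ, MeasurableSet A)
    (hdisj : (ξ : Set (Set X)).PairwiseDisjoint id) (hcover : ⋃₀ (ξ : Set (Set X)) = Set.univ)
    (hg : Integrable g μ) (hbdd : ∀ A ∈ ξ, BddBelow (g '' A)) :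
    lowerSum ξ μ.real g ≤ ∫ x, g x ∂μ := by
  rw [integral_eq_sum_setIntegral_of_partition hmeas hdisj hcover hg]
  refine Finset.sum_le_sum fun A hA => ?_
  rw [← smul_eq_mul, ← setIntegral_const]
  exact setIntegral_mono_on integrableOn_const hg.integrableOn (hmeas A hA) fun x hx =>
    csInf_le (hbdd A hA) ⟨x, hx, rfl⟩

end Partition

namespace MeasureTheory.ProbabilityMeasure

variable {X ι : Type*} [MeasurableSpace X] {ξ : Finset (Set X)} {w : Set X → ℝ}
  {l : Filter ι} {P : ι → ProbabilityMeasure X}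

theorem sum_eq_one_of_tendsto_measureReal [l.NeBot] (hmeas : ∀ A ∈ ξ, MeasurableSet A)
    (hdisj : (ξ : Set (Set X)).PairwiseDisjoint id) (hcover : ⋃₀ (ξ : Set (Set X)) = Set.univ)
    (hw : ∀ A ∈ ξ, Tendsto (fun i => (P i : Measure X).real A) l (𝓝 (w A))) :
    ∑ A ∈ ξ, w A = 1 := by
  refine tendsto_nhds_unique (tendsto_finsetSum ξ hw) ?_
  simp only [sum_measureReal_eq_univ_of_partition hmeas hdisj hcover, probReal_univ,
    tendsto_const_nhds]

theorem integral_mem_Icc_of_mapClusterPt [TopologicalSpace X] [OpensMeasurableSpace X]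
    {ν : ProbabilityMeasure X} (hν : MapClusterPt ν l P) (hmeas : ∀ A ∈ ξ, MeasurableSet A)
    (hdisj : (ξ : Set (Set X)).PairwiseDisjoint id) (hcover : ⋃₀ (ξ : Set (Set X)) = Set.univ)
    (hw : ∀ A ∈ ξ, Tendsto (fun i => (P i : Measure X).real A) l (𝓝 (w A))) (g : X →ᵇ ℝ) :
    ∫ x, g x ∂(ν : Measure X) ∈ Set.Icc (lowerSum ξ w g) (upperSum ξ w g) := by
  obtain ⟨U, hUl, hPU⟩ := mapClusterPt_iff_ultrafilter.1 hν
  have hintegral := tendsto_iff_forall_integral_tendsto.1 hPU g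
  have hwU : ∀ A ∈ ξ, Tendsto (fun i => (P i : Measure X).real A) U (𝓝 (w A)) :=
    fun A hA => (hw A hA).mono_left hUl
  have hbdd := g.isBounded_range
  have hsums {c : Set X → ℝ} : Tendsto (fun i => ∑ A ∈ ξ, (P i : Measure X).real A * c A) U
      (𝓝 (∑ A ∈ ξ, w A * c A)) := tendsto_finsetSum ξ fun A hA => (hwU A hA).mul_const _
  refine ⟨le_of_tendsto_of_tendsto hsums hintegral (Eventually.of_forall fun i => ?_),
    le_of_tendsto_of_tendsto hintegral hsums (Eventually.of_forall fun i => ?_)⟩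
  · exact lowerSum_le_integral hmeas hdisj hcover (g.integrable _) fun A _ =>
      hbdd.bddBelow.mono (Set.image_subset_range _ _)
  · exact integral_le_upperSum hmeas hdisj hcover (g.integrable _) fun A _ =>
      hbdd.bddAbove.mono (Set.image_subset_range _ _)

theorem eq_of_forall_integral_mem_Icc [MetricSpace X] [CompactSpace X] [BorelSpace X]
    {ξ : ℕ → Finset (Set X)} (hw₀ : ∀ n, ∀ A ∈ ξ n, 0 ≤ w A) (hw₁ : ∀ n, ∑ A ∈ ξ n, w A = 1)
    (hdiam : ∀ ε : ℝ, 0 < ε → ∃ N, ∀ n ≥ N, ∀ A ∈ ξ n, Metric.diam A ≤ ε)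
    {ν₁ ν₂ : ProbabilityMeasure X}
    (h₁ : ∀ (g : X →ᵇ ℝ) n, ∫ x, g x ∂(ν₁ : Measure X) ∈
      Set.Icc (lowerSum (ξ n) w g) (upperSum (ξ n) w g))
    (h₂ : ∀ (g : X →ᵇ ℝ) n, ∫ x, g x ∂(ν₂ : Measure X) ∈
      Set.Icc (lowerSum (ξ n) w g) (upperSum (ξ n) w g)) :
    ν₁ = ν₂ := by
  refine toMeasure_injective <| ext_of_forall_integral_eq_of_IsFiniteMeasure fun g =>
    eq_of_forall_dist_le fun ε hε => ?_
  obtain ⟨δ, hδ, hosc⟩ :=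
    (CompactSpace.uniformContinuous_of_continuous g.continuous).exists_forall_maxOscillation_le hε
  obtain ⟨N, hN⟩ := hdiam (δ / 2) (half_pos hδ)
  calc dist _ _ ≤ maxOscillation (ξ N) g :=
        abs_sub_le_maxOscillation_of_mem_Icc (hw₀ N) (hw₁ N) (h₁ g N) (h₂ g N)
    _ ≤ ε := hosc _ fun A hA =>
        ⟨Metric.isBounded_of_compactSpace, (hN N le_rfl A hA).trans_lt (half_lt_self hδ)⟩

end MeasureTheory.ProbabilityMeasure

theorem stmt7_general {X : Type*} [MetricSpace X] [CompactSpace X] [MeasurableSpace X] [BorelSpace X]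
    (μ : ℕ → Measure X) (hprob : ∀ n, IsProbabilityMeasure (μ n))
    (ξ : ℕ → Finset (Set X))
    (hmeas : ∀ n, ∀ A ∈ ξ n, MeasurableSet A)
    (hdisj : ∀ n, ∀ A ∈ ξ n, ∀ B ∈ ξ n, A ≠ B → Disjoint A B)
    (hcover : ∀ n, ⋃₀ (↑(ξ n) : Set (Set X)) = Set.univ)
    (hdiam : ∀ ε : ℝ, 0 < ε → ∃ N, ∀ n ≥ N, ∀ A ∈ ξ n, Metric.diam A ≤ ε)
    (μbar : Set X → ℝ)
    (hconv : ∀ n, ∀ A ∈ ξ n,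
      Tendsto (fun m => ((μ m) A).toReal) atTop (𝓝 (μbar A))) :
    ∃ ν : Measure X, IsProbabilityMeasure ν ∧
      (∀ g : C(X, ℝ),
        Tendsto (fun n => ∫ x, g x ∂(μ n)) atTop (𝓝 (∫ x, g x ∂ν))) ∧
      (∀ g : C(X, ℝ), ∀ n : ℕ,
        |(∑ A ∈ ξ n, μbar A * sSup ((g : X → ℝ) '' A)) - ∫ x, g x ∂ν| ≤
          sSup ((fun A : Set X => sSup ((g : X → ℝ) '' A) - sInf ((g : X → ℝ) '' A)) ''
            (↑(ξ n) : Set (Set X)))) := by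
  let P : ℕ → ProbabilityMeasure X := fun m => ⟨μ m, hprob m⟩
  have hpairwise : ∀ n, (ξ n : Set (Set X)).PairwiseDisjoint id := fun n A hA B hB =>
    hdisj n A hA B hB
  have hw₀ : ∀ n, ∀ A ∈ ξ n, 0 ≤ μbar A := fun n A hA =>
    ge_of_tendsto' (hconv n A hA) fun _ => ENNReal.toReal_nonneg
  have hw₁ : ∀ n, ∑ A ∈ ξ n, μbar A = 1 := fun n =>
    ProbabilityMeasure.sum_eq_one_of_tendsto_measureReal (P := P) (hmeas n) (hpairwise n)
      (hcover n) (hconv n)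
  have hbracket : ∀ ν, MapClusterPt ν atTop P → ∀ (g : X →ᵇ ℝ) n,
      ∫ x, g x ∂(ν : Measure X) ∈ Set.Icc (lowerSum (ξ n) μbar g) (upperSum (ξ n) μbar g) :=
    fun ν hν g n => ProbabilityMeasure.integral_mem_Icc_of_mapClusterPt hν (hmeas n) (hpairwise n)
      (hcover n) (hconv n) g
  obtain ⟨ν, hν⟩ := exists_clusterPt_of_compactSpace (map P atTop)
  have hlim : Tendsto P atTop (𝓝 ν) := tendsto_nhds_of_unique_mapClusterPt fun ν' hν' =>
    ProbabilityMeasure.eq_of_forall_integral_mem_Icc hw₀ hw₁ hdiam (hbracket ν' hν') (hbracket ν hν)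
  refine ⟨ν, inferInstance, fun g =>
    ProbabilityMeasure.tendsto_iff_forall_integral_tendsto.1 hlim (.mkOfCompact g), fun g n => ?_⟩
  have hν_mem := hbracket ν hν (.mkOfCompact g) n
  exact abs_sub_le_maxOscillation_of_mem_Icc (hw₀ n) (hw₁ n)
    ⟨hν_mem.1.trans hν_mem.2, le_rfl⟩ hν_mem

/-- weak convergence criterion for probability measures on a compact metric
space via a refining sequence of finite partitions, together with the error bound for
the approximating functionals. -/
theorem stmt7 {X : Type*} [MetricSpace X] [CompactSpace X] [MeasurableSpace X] [BorelSpace X]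
    (μ : ℕ → Measure X) (hprob : ∀ n, IsProbabilityMeasure (μ n))
    (ξ : ℕ → Finset (Set X))
    (hne : ∀ n, ∀ A ∈ ξ n, A.Nonempty)
    (hmeas : ∀ n, ∀ A ∈ ξ n, MeasurableSet A)
    (hdisj : ∀ n, ∀ A ∈ ξ n, ∀ B ∈ ξ n, A ≠ B → Disjoint A B)
    (hcover : ∀ n, ⋃₀ (↑(ξ n) : Set (Set X)) = Set.univ)
    (hdiam : ∀ ε : ℝ, 0 < ε → ∃ N, ∀ n ≥ N, ∀ A ∈ ξ n, Metric.diam A ≤ ε)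
    (μbar : Set X → ℝ)
    (hconv : ∀ n, ∀ A ∈ ξ n,
      Tendsto (fun m => ((μ m) A).toReal) atTop (𝓝 (μbar A))) :
    ∃ ν : Measure X, IsProbabilityMeasure ν ∧
      (∀ g : C(X, ℝ),
        Tendsto (fun n => ∫ x, g x ∂(μ n)) atTop (𝓝 (∫ x, g x ∂ν))) ∧
      (∀ g : C(X, ℝ), ∀ n : ℕ,
        |(∑ A ∈ ξ n, μbar A * sSup ((g : X → ℝ) '' A)) - ∫ x, g x ∂ν| ≤
          sSup ((fun A : Set X => sSup ((g : X → ℝ) '' A) - sInf ((g : X → ℝ) '' A)) ''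
            (↑(ξ n) : Set (Set X)))) :=
  stmt7_general μ hprob ξ hmeas hdisj hcover hdiam μbar hconv
end

section
/- Let K ⊆ ℝ^d be a cone. Then there is a constant c > 0 (depending only on K and d) such that for every m ≥ 1 and all d×d real matrices M_1,…,M_m satisfying M_i K ⊆ K for each i, one has ‖M_1 + ⋯ + M_m‖ ≥ c · (‖M_1‖ + ⋯ + ‖M_m‖), where ‖·‖ is the operator norm on d×d real matrices induced by the Euclidean norm on ℝ^d. -/
/-!
Choose `u` with `closedBall u r ⊆ K` and a functional `φ` with `ε ‖y‖ ≤ φ y` on `K`; the latter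
exists because the inner dual of a closed pointed cone has interior points. If `M` preserves `K`
and `‖x‖ = 1`, both `M (u ± r x)` lie in `K`, so
`2 r ‖M x‖ ≤ ‖M (u + r x)‖ + ‖M (u - r x)‖ ≤ (φ (M (u + r x)) + φ (M (u - r x))) / ε`,
which is `2 φ (M u) / ε`.
Hence `ε r ‖M‖ ≤ φ (M u)`, and summing, `ε r ∑ ‖M_i‖ ≤ φ ((∑ M_i) u) ≤ ‖φ‖ ‖u‖ ‖∑ M_i‖`.
-/

open Matrix Filter Topology

/-- The Euclidean norm on `ℝ^d`. -/
noncomputable def euclNorm {d : ℕ} (x : Fin d → ℝ) : ℝ :=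
  Real.sqrt (∑ i, (x i) ^ 2)

/-- The operator norm on `d × d` real matrices induced by the Euclidean norm on `ℝ^d`. -/
noncomputable def matOpNorm {d : ℕ} (M : Matrix (Fin d) (Fin d) ℝ) : ℝ :=
  sSup {r : ℝ | ∃ x : Fin d → ℝ, euclNorm x ≤ 1 ∧ r = euclNorm (M.mulVec x)}

/-- The spectral radius of a real square matrix: the maximum of `|μ|` over the complex
eigenvalues `μ` (roots of the characteristic polynomial over `ℂ`). -/
noncomputable def specRad {d : ℕ} (M : Matrix (Fin d) (Fin d) ℝ) : ℝ :=
  sSup {r : ℝ | ∃ μ : ℂ, (M.map Complex.ofReal).charpoly.IsRoot μ ∧ r = ‖μ‖}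

/-- The product `M_{w 0} M_{w 1} ⋯ M_{w (n-1)}` over a word `w` of length `n`. -/
noncomputable def wordProd {d k : ℕ} (A : Fin k → Matrix (Fin d) (Fin d) ℝ) {n : ℕ}
    (w : Fin n → Fin k) : Matrix (Fin d) (Fin d) ℝ :=
  (List.ofFn (fun j => A (w j))).prod

/-- A cone in `ℝ^d`: a topologically closed set with nonempty interior, closed under
addition and under multiplication by nonnegative reals, with `K ∩ (-K) = {0}`. -/
def IsCone {d : ℕ} (K : Set (Fin d → ℝ)) : Prop :=
  IsClosed K ∧ (interior K).Nonempty ∧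
    (∀ x ∈ K, ∀ y ∈ K, x + y ∈ K) ∧
    (∀ c : ℝ, 0 ≤ c → ∀ x ∈ K, c • x ∈ K) ∧
    (∀ x ∈ K, -x ∈ K → x = 0)

open Metric Set

section NormedSpace

variable {E F : Type*} [NormedAddCommGroup E] [NormedSpace ℝ E]
  [NormedAddCommGroup F] [NormedSpace ℝ F]

theorem ContinuousLinearMap.mul_mul_opNorm_le_of_mapsTo {K : Set E} {L : Set F} {u : E}
    {r ε : ℝ} (f : E →L[ℝ] F) (hf : MapsTo f K L) (φ : F →L[ℝ] ℝ)
    (hφ : ∀ y ∈ L, ε * ‖y‖ ≤ φ y) (hr : 0 < r) (hε : 0 < ε) (hball : closedBall u r ⊆ K) :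
    ε * r * ‖f‖ ≤ φ (f u) := by
  have hu : u ∈ K := hball (mem_closedBall_self hr.le)
  have hfu : 0 ≤ φ (f u) := (mul_nonneg hε.le (norm_nonneg _)).trans (hφ _ (hf hu))
  have hunit : ∀ x, ‖x‖ = 1 → ‖f x‖ ≤ φ (f u) / (ε * r) := by
    intro x hx
    have hrx : ‖r • x‖ = r := by rw [norm_smul, hx, Real.norm_of_nonneg hr.le, mul_one]
    have hplus : u + r • x ∈ K := hball (by simp [hrx])
    have hminus : u - r • x ∈ K := hball (by simp [hrx])
    have hdiff : (2 * r) • f x = f (u + r • x) - f (u - r • x) := by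
      simp only [map_add, map_sub, map_smul]; module
    have htri : 2 * r * ‖f x‖ ≤ ‖f (u + r • x)‖ + ‖f (u - r • x)‖ := by
      rw [← Real.norm_of_nonneg (by positivity : 0 ≤ 2 * r), ← norm_smul, hdiff]
      exact norm_sub_le _ _
    have hsum : φ (f (u + r • x)) + φ (f (u - r • x)) = 2 * φ (f u) := by
      simp only [map_add, map_sub]; ring
    rw [le_div_iff₀ (by positivity)]
    nlinarith [hφ _ (hf hplus), hφ _ (hf hminus)]
  have := f.opNorm_le_of_unit_norm (div_nonneg hfu (by positivity)) hunit
  rwa [le_div_iff₀ (by positivity), mul_comm] at this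

theorem exists_pos_mul_sum_opNorm_le_opNorm_sum {K : Set E} (hK : (interior K).Nonempty)
    (φ : E →L[ℝ] ℝ) {ε : ℝ} (hε : 0 < ε) (hφ : ∀ y ∈ K, ε * ‖y‖ ≤ φ y) :
    ∃ c, 0 < c ∧ ∀ {ι : Type*} (s : Finset ι) (f : ι → E →L[ℝ] E),
      (∀ i ∈ s, MapsTo (f i) K K) → c * ∑ i ∈ s, ‖f i‖ ≤ ‖∑ i ∈ s, f i‖ := by
  obtain ⟨u, hu⟩ := hK
  obtain ⟨r, hr, hball⟩ := nhds_basis_closedBall.mem_iff.1 (mem_interior_iff_mem_nhds.1 hu)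
  -- The `+ 1` keeps the constant positive when `φ = 0` or `u = 0`.
  refine ⟨ε * r / (‖φ‖ * ‖u‖ + 1), by positivity, fun s f hf => ?_⟩
  have hφu : φ ((∑ i ∈ s, f i) u) ≤ ‖φ‖ * ‖u‖ * ‖∑ i ∈ s, f i‖ :=
    calc φ ((∑ i ∈ s, f i) u) ≤ ‖φ‖ * ‖(∑ i ∈ s, f i) u‖ :=
          (Real.le_norm_self _).trans (φ.le_opNorm _)
      _ ≤ ‖φ‖ * (‖∑ i ∈ s, f i‖ * ‖u‖) := by gcongr; exact ContinuousLinearMap.le_opNorm _ _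
      _ = ‖φ‖ * ‖u‖ * ‖∑ i ∈ s, f i‖ := by ring
  rw [div_mul_eq_mul_div, div_le_iff₀ (by positivity)]
  calc ε * r * ∑ i ∈ s, ‖f i‖ ≤ ∑ i ∈ s, φ (f i u) := by
        rw [Finset.mul_sum]
        exact Finset.sum_le_sum fun i hi =>
          (f i).mul_mul_opNorm_le_of_mapsTo (hf i hi) φ hφ hr hε hball
    _ = φ ((∑ i ∈ s, f i) u) := by simp only [_root_.sum_apply, map_sum]
    _ ≤ ‖∑ i ∈ s, f i‖ * (‖φ‖ * ‖u‖ + 1) := by nlinarith [norm_nonneg (∑ i ∈ s, f i)]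

end NormedSpace

namespace ProperCone

open scoped RealInnerProductSpace

variable {E : Type*} [NormedAddCommGroup E] [InnerProductSpace ℝ E] [FiniteDimensional ℝ E]

theorem interior_innerDual_nonempty (C : ProperCone ℝ E) (hC : ∀ x ∈ C, -x ∈ C → x = 0) :
    (interior (innerDual (C : Set E) : Set E)).Nonempty := by
  set D : Set E := ((innerDual (C : Set E) : ProperCone ℝ E) : Set E)
  have h0 : (0 : E) ∈ D := zero_mem _
  rw [(innerDual (C : Set E)).convex.interior_nonempty_iff_affineSpan_eq_top,
    AffineSubspace.affineSpan_eq_top_iff_vectorSpan_eq_top_of_nonempty ℝ E E ⟨0, h0⟩,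
    vectorSpan_eq_span_vsub_set_right ℝ h0]
  simp only [vsub_eq_sub, sub_zero, image_id']
  by_contra hspan
  obtain ⟨v, hv, hv0⟩ := Submodule.exists_mem_ne_zero_of_ne_bot
    (mt Submodule.orthogonal_eq_bot_iff.1 hspan)
  have horth : ∀ w ∈ D, ⟪w, v⟫ = 0 := fun w hw =>
    (Submodule.mem_orthogonal _ _).1 hv w (Submodule.subset_span hw)
  -- A vector orthogonal to the dual cone lies, together with its negative, in the double dual `C`.
  have hmem : ∀ w, (∀ y ∈ D, ⟪y, w⟫ = 0) → w ∈ C := fun w hw => by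
    rw [← innerDual_innerDual C]
    exact fun y hy => (hw y hy).ge
  exact hv0 <| hC v (hmem v horth) <| hmem (-v) fun y hy => by
    rw [inner_neg_right, horth y hy, neg_zero]

theorem exists_mul_norm_le_inner (C : ProperCone ℝ E) (hC : ∀ x ∈ C, -x ∈ C → x = 0) :
    ∃ v : E, ∃ ε, 0 < ε ∧ ∀ x ∈ C, ε * ‖x‖ ≤ ⟪v, x⟫ := by
  obtain ⟨v, hv⟩ := C.interior_innerDual_nonempty hC
  obtain ⟨ε, hε, hball⟩ := nhds_basis_closedBall.mem_iff.1 (mem_interior_iff_mem_nhds.1 hv)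
  refine ⟨v, ε, hε, fun x hx => ?_⟩
  rcases eq_or_ne x 0 with rfl | hx0
  · simp
  have hxpos : 0 < ‖x‖ := norm_pos_iff.2 hx0
  have hw : v - (ε / ‖x‖) • x ∈ innerDual (C : Set E) := hball <| by
    rw [mem_closedBall, dist_eq_norm, sub_sub_cancel_left, norm_neg, norm_smul,
      Real.norm_of_nonneg (by positivity), div_mul_cancel₀ _ hxpos.ne']
  have hxw := mem_innerDual.1 hw hx
  rw [inner_sub_right, real_inner_smul_right, real_inner_self_eq_norm_sq, real_inner_comm] at hxw
  have : ε / ‖x‖ * ‖x‖ ^ 2 = ε * ‖x‖ := by field_simp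
  linarith

end ProperCone

section EuclideanSpace

variable {d : ℕ}

theorem euclNorm_ofLp (x : EuclideanSpace ℝ (Fin d)) : euclNorm (WithLp.ofLp x) = ‖x‖ := by
  simp [euclNorm, EuclideanSpace.norm_eq]

theorem matOpNorm_eq_norm_toEuclideanCLM (M : Matrix (Fin d) (Fin d) ℝ) :
    matOpNorm M = ‖toEuclideanCLM (𝕜 := ℝ) M‖ := by
  have hnorm (x : EuclideanSpace ℝ (Fin d)) :
      ‖toEuclideanCLM (𝕜 := ℝ) M x‖ = euclNorm (M *ᵥ WithLp.ofLp x) := by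
    rw [← euclNorm_ofLp, ofLp_toEuclideanCLM]
  rw [← ContinuousLinearMap.sSup_unitClosedBall_eq_norm, matOpNorm]
  congr 1
  ext r
  rw [mem_ofPred_eq, (WithLp.equiv 2 (Fin d → ℝ)).symm.exists_congr_left]
  simp [euclNorm_ofLp, hnorm, eq_comm]

def IsCone.toProperCone {K : Set (Fin d → ℝ)} (hK : IsCone K) :
    ProperCone ℝ (EuclideanSpace ℝ (Fin d)) where
  carrier := WithLp.ofLp ⁻¹' K
  add_mem' hx hy := hK.2.2.1 _ hx _ hy
  zero_mem' := by
    obtain ⟨x, hx⟩ := hK.2.1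
    simpa using hK.2.2.2.1 0 le_rfl x (interior_subset hx)
  smul_mem' c _ hx := hK.2.2.2.1 c c.2 _ hx
  isClosed' := hK.1.preimage (PiLp.continuous_ofLp 2 _)

theorem IsCone.interior_toProperCone_nonempty {K : Set (Fin d → ℝ)} (hK : IsCone K) :
    (interior (hK.toProperCone : Set (EuclideanSpace ℝ (Fin d)))).Nonempty := by
  obtain ⟨x, hx⟩ := hK.2.1
  exact ⟨WithLp.toLp 2 x,
    preimage_interior_subset_interior_preimage (PiLp.continuous_ofLp 2 _) hx⟩

theorem IsCone.eq_zero_of_mem_toProperCone {K : Set (Fin d → ℝ)} (hK : IsCone K)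
    {x : EuclideanSpace ℝ (Fin d)} (hx : x ∈ hK.toProperCone) (hnx : -x ∈ hK.toProperCone) :
    x = 0 := by
  have : WithLp.ofLp x = 0 := hK.2.2.2.2 _ hx hnx
  simpa using this

end EuclideanSpace

/-- reverse triangle inequality for matrices preserving a cone `K ⊆ ℝ^d`:
there is `c > 0` depending only on `K` and `d` with
`‖M_1 + ⋯ + M_m‖ ≥ c (‖M_1‖ + ⋯ + ‖M_m‖)` whenever each `M_i` maps `K` into `K`. -/
theorem stmt8 {d : ℕ} (K : Set (Fin d → ℝ)) (hK : IsCone K) :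
    ∃ c : ℝ, 0 < c ∧ ∀ m : ℕ, 1 ≤ m → ∀ M : Fin m → Matrix (Fin d) (Fin d) ℝ,
      (∀ i : Fin m, ∀ x ∈ K, (M i).mulVec x ∈ K) →
      c * (∑ i, matOpNorm (M i)) ≤ matOpNorm (∑ i, M i) := by
  obtain ⟨v, ε, hε, hv⟩ :=
    hK.toProperCone.exists_mul_norm_le_inner fun _ => hK.eq_zero_of_mem_toProperCone
  obtain ⟨c, hc, hsum⟩ := exists_pos_mul_sum_opNorm_le_opNorm_sum
    hK.interior_toProperCone_nonempty (innerSL ℝ v) hε hv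
  refine ⟨c, hc, fun m _ M hM => ?_⟩
  simpa [matOpNorm_eq_norm_toEuclideanCLM, map_sum] using
    hsum Finset.univ (fun i => toEuclideanCLM (𝕜 := ℝ) (M i)) fun i _ x hx => hM i _ hx
end

section
/- Let A_0,…,A_{k−1} be d×d entrywise-nonnegative real matrices with sum A := A_0 + ⋯ + A_{k−1}, and let ρ := ρ(A) with ρ > 0. Suppose the joint spectral radius of the family equals ρ, i.e. max_{i_1,…,i_n ∈ {0,…,k−1}} ‖A_{i_1}⋯A_{i_n}‖^{1/n} → ρ as n → ∞. Let v ∈ ℝ^d be entrywise nonnegative with A v = ρ v. Then for every sequence (i_j)_{j≥1} with values in {0,…,k−1} that is not eventually periodic, liminf_{n→∞} ρ^{−n} ‖A_{i_1} A_{i_2} ⋯ A_{i_n} v‖ = 0. -/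
open Matrix Filter Topology

/-! Write `g n = ρ⁻ⁿ A_{i₁} ⋯ A_{iₙ} v`. Since the vectors `ρ⁻ᵖ A_q v` over all words `q` of
length `p` are nonnegative and sum to `v`, the sequence `g` decreases coordinatewise to some `u`,
and at time `n` the words `q` other than the continuation `i_{n+1} ⋯ i_{n+p}` actually followed
carry, in each coordinate, at most `g n - g (n + p) ≤ g n - u`. Suppose `u s > 0`. The `s`-rows of
the normalized prefixes (weighted by `v`) lie in a compact box, so two of them, at large times
`n < n'`, are close; as the sequence is not eventually periodic, some continuation `q` followed
after `n'` is not followed after `n`. Then `q` carries at least `u s` after `n'` but less than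
`u s / 2` after `n`, contradicting the closeness of the two rows. -/

section nonneg

variable {m n R : Type*} [Fintype n]

lemma Matrix.mul_apply_nonneg [Semiring R] [PartialOrder R] [IsOrderedRing R] {l : Type*}
    {M : Matrix m n R} {N : Matrix n l R} (hM : ∀ s t, 0 ≤ M s t) (hN : ∀ s t, 0 ≤ N s t)
    (s : m) (t : l) : 0 ≤ (M * N) s t :=
  Finset.sum_nonneg fun u _ => mul_nonneg (hM s u) (hN u t)

lemma Matrix.mulVec_nonneg [Semiring R] [PartialOrder R] [IsOrderedRing R] {M : Matrix m n R}
    {x : n → R} (hM : ∀ s t, 0 ≤ M s t) (hx : 0 ≤ x) : 0 ≤ M *ᵥ x :=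
  fun s => Finset.sum_nonneg fun t _ => mul_nonneg (hM s t) (hx t)

lemma Matrix.mulVec_mono [Ring R] [PartialOrder R] [IsOrderedRing R] {M : Matrix m n R}
    {x y : n → R} (hM : ∀ s t, 0 ≤ M s t) (hxy : x ≤ y) : M *ᵥ x ≤ M *ᵥ y := by
  have := Matrix.mulVec_nonneg hM (sub_nonneg.2 hxy)
  rwa [mulVec_sub, sub_nonneg] at this

lemma Matrix.abs_mulVec_sub_mulVec_le {L L' : Matrix m n ℝ} {x v : n → ℝ} (hx : 0 ≤ x)
    (hxv : x ≤ v) (s : m) :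
    |(L *ᵥ x) s - (L' *ᵥ x) s| ≤ ∑ t, |L s t * v t - L' s t * v t| := by
  rw [← Pi.sub_apply, ← sub_mulVec]
  calc |((L - L') *ᵥ x) s| ≤ ∑ t, |L s t - L' s t| * x t := by
        refine (Finset.abs_sum_le_sum_abs _ _).trans_eq (Finset.sum_congr rfl fun t _ => ?_)
        rw [abs_mul, abs_of_nonneg (hx t)]
        rfl
    _ ≤ ∑ t, |L s t - L' s t| * v t :=
        Finset.sum_le_sum fun t _ => mul_le_mul_of_nonneg_left (hxv t) (abs_nonneg _)
    _ = ∑ t, |L s t * v t - L' s t * v t| := by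
        refine Finset.sum_congr rfl fun t _ => ?_
        rw [← sub_mul, abs_mul, abs_of_nonneg ((hx t).trans (hxv t))]

end nonneg

lemma Matrix.pow_mulVec_of_mulVec_eq {n R : Type*} [Fintype n] [DecidableEq n] [CommSemiring R]
    {M : Matrix n n R} {v : n → R} {ρ : R} (h : M *ᵥ v = ρ • v) (p : ℕ) :
    (M ^ p) *ᵥ v = ρ ^ p • v := by
  induction p with
  | zero => simp
  | succ p ih => rw [pow_succ', ← mulVec_mulVec, ih, mulVec_smul, h, smul_smul, ← pow_succ]

lemma IsCompact.exists_lt_dist_lt {X : Type*} [PseudoMetricSpace X] {K : Set X}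
    (hK : IsCompact K) {f : ℕ → X} (hf : ∀ n, f n ∈ K) {ε : ℝ} (hε : 0 < ε) (N : ℕ) :
    ∃ n n', N ≤ n ∧ n < n' ∧ dist (f n) (f n') < ε := by
  obtain ⟨_, -, φ, hφ, hlim⟩ := hK.tendsto_subseq hf
  obtain ⟨M, hM⟩ := Metric.cauchySeq_iff.1 hlim.cauchySeq ε hε
  exact ⟨φ (M + N), φ (M + N + 1), (Nat.le_add_left N M).trans (hφ.id_le _),
    hφ (Nat.lt_succ_self _), hM _ (by omega) _ (by omega)⟩

lemma exists_window_ne_of_not_eventually_periodic {α : Type*} {idx : ℕ → α}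
    (hap : ¬ ∃ N p : ℕ, 1 ≤ p ∧ ∀ j ≥ N, idx (j + p) = idx j) {n n' : ℕ} (h : n < n') :
    ∃ p, (fun j : Fin p => idx (n' + j)) ≠ fun j : Fin p => idx (n + j) := by
  push Not at hap
  obtain ⟨j, hj, hne⟩ := hap n (n' - n) (by omega)
  refine ⟨j - n + 1, fun heq => hne ?_⟩
  have := congrFun heq ⟨j - n, by omega⟩
  dsimp only at this
  rwa [show n' + (j - n) = j + (n' - n) by omega, show n + (j - n) = j by omega] at this

section words

variable {d k : ℕ} (A : Fin k → Matrix (Fin d) (Fin d) ℝ)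

lemma wordProd_cons {n : ℕ} (i : Fin k) (w : Fin n → Fin k) :
    wordProd A (Fin.cons i w) = A i * wordProd A w := by
  simp [wordProd, List.ofFn_succ]

lemma wordProd_prefix_add (idx : ℕ → Fin k) (n p : ℕ) :
    wordProd A (fun j : Fin (n + p) => idx j) =
      wordProd A (fun j : Fin n => idx j) * wordProd A (fun j : Fin p => idx (n + j)) := by
  simp [wordProd, List.ofFn_add]

lemma sum_wordProd (p : ℕ) : ∑ q : Fin p → Fin k, wordProd A q = (∑ i, A i) ^ p := by
  induction p with
  | zero => simp [wordProd]
  | succ p ih =>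
    rw [← (Fin.consEquiv fun _ => Fin k).sum_comp, Fintype.sum_prod_type, pow_succ']
    simp only [Fin.consEquiv, Equiv.coe_fn_mk, wordProd_cons, ← Finset.mul_sum, ih,
      Finset.sum_mul]

variable {A} in
lemma wordProd_nonneg (hA : ∀ i s t, 0 ≤ A i s t) {n : ℕ} (w : Fin n → Fin k) (s t : Fin d) :
    0 ≤ wordProd A w s t := by
  induction n generalizing s t with
  | zero => simpa [wordProd] using zero_le_one_elem s t
  | succ n ih =>
    rw [← Fin.cons_self_tail w, wordProd_cons]
    exact mul_apply_nonneg (hA _) (ih _) s t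

end words

section orbit

variable {d k : ℕ} {A : Fin k → Matrix (Fin d) (Fin d) ℝ} {ρ : ℝ} {v : Fin d → ℝ}

noncomputable def normalizedPrefix (A : Fin k → Matrix (Fin d) (Fin d) ℝ) (ρ : ℝ)
    (idx : ℕ → Fin k) (n : ℕ) : Matrix (Fin d) (Fin d) ℝ :=
  (ρ ^ n)⁻¹ • wordProd A (fun j : Fin n => idx j)

noncomputable def normalizedWordVec (A : Fin k → Matrix (Fin d) (Fin d) ℝ) (ρ : ℝ)
    (v : Fin d → ℝ) {p : ℕ} (q : Fin p → Fin k) : Fin d → ℝ :=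
  (ρ ^ p)⁻¹ • wordProd A q *ᵥ v

lemma normalizedPrefix_nonneg (hA : ∀ i s t, 0 ≤ A i s t) (hρ : 0 < ρ) (idx : ℕ → Fin k)
    (n : ℕ) (s t : Fin d) : 0 ≤ normalizedPrefix A ρ idx n s t :=
  mul_nonneg (inv_nonneg.2 (pow_pos hρ n).le) (wordProd_nonneg hA _ s t)

lemma normalizedWordVec_nonneg (hA : ∀ i s t, 0 ≤ A i s t) (hρ : 0 < ρ) (hv : 0 ≤ v)
    {p : ℕ} (q : Fin p → Fin k) : 0 ≤ normalizedWordVec A ρ v q :=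
  smul_nonneg (inv_nonneg.2 (pow_pos hρ p).le) (mulVec_nonneg (wordProd_nonneg hA q) hv)

lemma sum_normalizedWordVec (hρ : ρ ≠ 0) (heig : (∑ i, A i) *ᵥ v = ρ • v) (p : ℕ) :
    ∑ q : Fin p → Fin k, normalizedWordVec A ρ v q = v := by
  simp only [normalizedWordVec, ← Finset.smul_sum, ← sum_mulVec, sum_wordProd,
    pow_mulVec_of_mulVec_eq heig, smul_smul, inv_mul_cancel₀ (pow_ne_zero p hρ), one_smul]

lemma normalizedWordVec_le (hA : ∀ i s t, 0 ≤ A i s t) (hρ : 0 < ρ) (hv : 0 ≤ v)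
    (heig : (∑ i, A i) *ᵥ v = ρ • v) {p : ℕ} (q : Fin p → Fin k) :
    normalizedWordVec A ρ v q ≤ v :=
  calc normalizedWordVec A ρ v q ≤ ∑ q', normalizedWordVec A ρ v q' :=
        Finset.single_le_sum (fun q' _ => normalizedWordVec_nonneg hA hρ hv q')
          (Finset.mem_univ q)
    _ = v := sum_normalizedWordVec hρ.ne' heig p

lemma normalizedPrefix_add_mulVec (idx : ℕ → Fin k) (n p : ℕ) :
    normalizedPrefix A ρ idx (n + p) *ᵥ v =
      normalizedPrefix A ρ idx n *ᵥ normalizedWordVec A ρ v (fun j : Fin p => idx (n + j)) := by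
  rw [normalizedPrefix, normalizedPrefix, normalizedWordVec, wordProd_prefix_add, mulVec_smul,
    mulVec_mulVec, Matrix.smul_mul, smul_mulVec, smul_mulVec, smul_smul, pow_add,
    mul_inv, mul_comm]

variable (hA : ∀ i s t, 0 ≤ A i s t) (hρ : 0 < ρ) (hv : 0 ≤ v)
  (heig : (∑ i, A i) *ᵥ v = ρ • v) (idx : ℕ → Fin k)
include hA hρ hv heig

lemma antitone_normalizedPrefix_mulVec :
    Antitone fun n => normalizedPrefix A ρ idx n *ᵥ v := by
  intro n m hnm
  obtain ⟨p, rfl⟩ := exists_add_of_le hnm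
  dsimp only
  rw [normalizedPrefix_add_mulVec]
  exact mulVec_mono (normalizedPrefix_nonneg hA hρ idx n) (normalizedWordVec_le hA hρ hv heig _)

lemma normalizedPrefix_mulVec_add_le {n p : ℕ} {q : Fin p → Fin k}
    (hq : q ≠ fun j : Fin p => idx (n + j)) :
    normalizedPrefix A ρ idx n *ᵥ normalizedWordVec A ρ v q +
        normalizedPrefix A ρ idx (n + p) *ᵥ v ≤ normalizedPrefix A ρ idx n *ᵥ v := by
  rw [normalizedPrefix_add_mulVec]
  calc _ ≤ ∑ q', normalizedPrefix A ρ idx n *ᵥ normalizedWordVec A ρ v q' :=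
        Finset.add_le_sum (fun q' _ => mulVec_nonneg (normalizedPrefix_nonneg hA hρ idx n)
          (normalizedWordVec_nonneg hA hρ hv q')) (Finset.mem_univ _) (Finset.mem_univ _) hq
    _ = normalizedPrefix A ρ idx n *ᵥ v := by rw [← mulVec_sum, sum_normalizedWordVec hρ.ne' heig]

variable {idx} (hap : ¬ ∃ N p : ℕ, 1 ≤ p ∧ ∀ j ≥ N, idx (j + p) = idx j)
include hap

lemma nonpos_of_tendsto_normalizedPrefix_mulVec {s : Fin d} {u : ℝ}
    (hle : ∀ n, u ≤ (normalizedPrefix A ρ idx n *ᵥ v) s)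
    (hlim : Tendsto (fun n => (normalizedPrefix A ρ idx n *ᵥ v) s) atTop (𝓝 u)) : u ≤ 0 := by
  by_contra! hu
  set L := normalizedPrefix A ρ idx
  obtain ⟨N, hN⟩ :=
    eventually_atTop.1 (hlim.eventually (gt_mem_nhds (by linarith : u < 3 / 2 * u)))
  have hrow : ∀ n, (fun t => L n s t * v t) ∈ Set.Icc 0 (fun _ => (L 0 *ᵥ v) s) := fun n =>
    ⟨fun t => mul_nonneg (normalizedPrefix_nonneg hA hρ idx n s t) (hv t), fun t =>
      (Finset.single_le_sum (fun t' _ => mul_nonneg (normalizedPrefix_nonneg hA hρ idx n s t')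
        (hv t')) (Finset.mem_univ t)).trans
        (antitone_normalizedPrefix_mulVec hA hρ hv heig idx (Nat.zero_le n) s)⟩
  have hd : (0 : ℝ) < d := Nat.cast_pos.2 s.pos
  obtain ⟨n, n', hn, hnn', hclose⟩ :=
    isCompact_Icc.exists_lt_dist_lt hrow (by positivity : 0 < u / (4 * d)) N
  obtain ⟨p, hp⟩ := exists_window_ne_of_not_eventually_periodic hap hnn'
  set x := normalizedWordVec A ρ v (fun j : Fin p => idx (n' + j))
  have hx_at_n' : u ≤ (L n' *ᵥ x) s := by rw [← normalizedPrefix_add_mulVec]; exact hle _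
  have hx_at_n : (L n *ᵥ x) s + u ≤ (L n *ᵥ v) s := by
    have := normalizedPrefix_mulVec_add_le hA hρ hv heig idx hp s
    linarith [hle (n + p), Pi.add_apply (L n *ᵥ x) (L (n + p) *ᵥ v) s]
  have hdiff : |(L n' *ᵥ x) s - (L n *ᵥ x) s| ≤ u / 4 :=
    calc _ ≤ ∑ t, |L n' s t * v t - L n s t * v t| :=
          abs_mulVec_sub_mulVec_le (normalizedWordVec_nonneg hA hρ hv _)
            (normalizedWordVec_le hA hρ hv heig _) s
      _ ≤ ∑ _t : Fin d, u / (4 * d) := Finset.sum_le_sum fun t _ => by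
          rw [abs_sub_comm, ← Real.dist_eq]
          exact (dist_le_pi_dist _ _ t).trans hclose.le
      _ = u / 4 := by
          rw [Finset.sum_const, Finset.card_univ, Fintype.card_fin, nsmul_eq_mul]
          field_simp
  linarith [le_abs_self ((L n' *ᵥ x) s - (L n *ᵥ x) s), hN n hn]

theorem tendsto_normalizedPrefix_mulVec :
    Tendsto (fun n => normalizedPrefix A ρ idx n *ᵥ v) atTop (𝓝 0) := by
  refine tendsto_pi_nhds.2 fun s => ?_
  have hnonneg : ∀ n, 0 ≤ (normalizedPrefix A ρ idx n *ᵥ v) s := fun n =>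
    mulVec_nonneg (normalizedPrefix_nonneg hA hρ idx n) hv s
  have hbdd : BddBelow (Set.range fun n => (normalizedPrefix A ρ idx n *ᵥ v) s) :=
    ⟨0, Set.forall_mem_range.2 hnonneg⟩
  have hlim := tendsto_atTop_ciInf
    (fun n m h => antitone_normalizedPrefix_mulVec hA hρ hv heig idx h s) hbdd
  have hinf : ⨅ n, (normalizedPrefix A ρ idx n *ᵥ v) s = 0 :=
    le_antisymm (nonpos_of_tendsto_normalizedPrefix_mulVec hA hρ hv heig hap
      (fun n => ciInf_le hbdd n) hlim) (le_ciInf hnonneg)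
  rwa [hinf] at hlim

end orbit

lemma continuous_euclNorm {d : ℕ} : Continuous (euclNorm : (Fin d → ℝ) → ℝ) := by
  unfold euclNorm
  fun_prop

lemma euclNorm_smul {d : ℕ} (c : ℝ) (x : Fin d → ℝ) : euclNorm (c • x) = |c| * euclNorm x := by
  simp only [euclNorm, Pi.smul_apply, smul_eq_mul, mul_pow, ← Finset.mul_sum]
  rw [Real.sqrt_mul (sq_nonneg c), Real.sqrt_sq_eq_abs]

theorem stmt11_general {d k : ℕ} (A : Fin k → Matrix (Fin d) (Fin d) ℝ)
    (hA : ∀ i : Fin k, ∀ s t, 0 ≤ A i s t)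
    (ρ : ℝ) (hρpos : 0 < ρ)
    (v : Fin d → ℝ) (hv : ∀ i, 0 ≤ v i)
    (heig : (∑ i, A i).mulVec v = ρ • v)
    (idx : ℕ → Fin k)
    (hap : ¬ ∃ N p : ℕ, 1 ≤ p ∧ ∀ j ≥ N, idx (j + p) = idx j) :
    Filter.liminf
      (fun n : ℕ =>
        ρ ^ (-(n : ℤ)) * euclNorm ((wordProd A (fun j : Fin n => idx j)).mulVec v))
      atTop = 0 := by
  have hlim := (continuous_euclNorm.tendsto 0).comp
    (tendsto_normalizedPrefix_mulVec hA hρpos hv heig hap)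
  have heucl_zero : euclNorm (0 : Fin d → ℝ) = 0 := by simp [euclNorm]
  rw [heucl_zero] at hlim
  refine hlim.congr (fun n => ?_) |>.liminf_eq
  rw [Function.comp_apply, normalizedPrefix, smul_mulVec, euclNorm_smul,
    abs_of_pos (inv_pos.2 (pow_pos hρpos n)), _root_.zpow_neg, zpow_natCast]

/-- for entrywise-nonnegative matrices whose joint spectral radius equals
`ρ = ρ(A) > 0`, and a nonnegative `ρ`-eigenvector `v` of the sum matrix, every sequence of
indices that is not eventually periodic satisfies
`liminf ρ^{-n} ‖A_{i_1} ⋯ A_{i_n} v‖ = 0`. -/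
theorem stmt11 {d k : ℕ} (hk : 0 < k) (A : Fin k → Matrix (Fin d) (Fin d) ℝ)
    (hA : ∀ i : Fin k, ∀ s t, 0 ≤ A i s t)
    (ρ : ℝ) (hρ : ρ = specRad (∑ i, A i)) (hρpos : 0 < ρ)
    (hjsr : Tendsto
      (fun n : ℕ => ⨆ w : Fin n → Fin k, matOpNorm (wordProd A w) ^ ((1 : ℝ) / n))
      atTop (𝓝 ρ))
    (v : Fin d → ℝ) (hv : ∀ i, 0 ≤ v i)
    (heig : (∑ i, A i).mulVec v = ρ • v)
    (idx : ℕ → Fin k)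
    (hap : ¬ ∃ N p : ℕ, 1 ≤ p ∧ ∀ j ≥ N, idx (j + p) = idx j) :
    Filter.liminf
      (fun n : ℕ =>
        ρ ^ (-(n : ℤ)) * euclNorm ((wordProd A (fun j : Fin n => idx j)).mulVec v))
      atTop = 0 :=
  stmt11_general A hA ρ hρpos v hv heig idx hap
end

section
/- Let E_0,…,E_{k−1} be d×d entrywise-nonnegative real matrices whose sum E := E_0 + ⋯ + E_{k−1} has all entries strictly positive. Then exactly one of the following holds: either there exists j ∈ {0,…,k−1} with E_j = E, or there exists a constant c ∈ (0,1) such that for all j_0, j_1, j_2 ∈ {0,…,k−1} and all indices s, t ∈ {1,…,d}, (E_{j_0} E_{j_1} E_{j_2})_{st} ≤ c · (E^3)_{st}. -/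
open Matrix

/-- block dichotomy. For entrywise-nonnegative `d × d` matrices
`E_0, …, E_{k-1}` (`d ≥ 1`) whose sum `E` has strictly positive entries, exactly one of
the following holds: some `E_j` equals `E`, or there is `c ∈ (0,1)` with
`(E_{j_0} E_{j_1} E_{j_2})_{st} ≤ c (E^3)_{st}` for all choices of indices. -/
theorem stmt13 {d k : ℕ} (hd : 0 < d) (E : Fin k → Matrix (Fin d) (Fin d) ℝ)
    (hE : ∀ i : Fin k, ∀ s t, 0 ≤ E i s t)
    (hpos : ∀ s t, 0 < (∑ i, E i) s t) :
    Xor' (∃ j : Fin k, E j = ∑ i, E i)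
      (∃ c : ℝ, 0 < c ∧ c < 1 ∧ ∀ j0 j1 j2 : Fin k, ∀ s t : Fin d,
        (E j0 * E j1 * E j2) s t ≤ c * ((∑ i, E i) ^ 3) s t) := by
  classical
  set S : Matrix (Fin d) (Fin d) ℝ := ∑ i, E i with hSdef
  haveI : NeZero d := ⟨hd.ne'⟩
  have hdne : (Finset.univ : Finset (Fin d)).Nonempty := Finset.univ_nonempty
  have hSn : ∀ s t, 0 ≤ S s t := fun s t => (hpos s t).le
  have hk : 0 < k := by
    rcases Nat.eq_zero_or_pos k with hk0 | hk0
    · subst hk0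
      have := hpos ⟨0, hd⟩ ⟨0, hd⟩
      simp [hSdef] at this
    · exact hk0
  haveI : NeZero k := ⟨hk.ne'⟩
  have hle : ∀ j s t, E j s t ≤ S s t := by
    intro j s t
    have := Finset.single_le_sum (f := fun i => E i s t)
      (fun i _ => hE i s t) (Finset.mem_univ j)
    simpa [hSdef, Matrix.sum_apply] using this
  have hSS : ∀ s t, 0 < (S * S) s t := by
    intro s t
    rw [Matrix.mul_apply]
    exact Finset.sum_pos (fun a _ => mul_pos (hpos s a) (hpos a t)) hdne
  have hS3 : ∀ s t, 0 < (S * S * S) s t := by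
    intro s t
    rw [Matrix.mul_apply]
    exact Finset.sum_pos (fun a _ => mul_pos (hSS s a) (hpos a t)) hdne
  have hpow : S ^ 3 = S * S * S := by
    rw [pow_succ, pow_succ, pow_one]
  have htripn : ∀ j s t, 0 ≤ (S * E j * S) s t := by
    intro j s t
    rw [Matrix.mul_apply]
    refine Finset.sum_nonneg fun b _ => mul_nonneg ?_ (hSn b t)
    rw [Matrix.mul_apply]
    exact Finset.sum_nonneg fun a _ => mul_nonneg (hSn s a) (hE j a b)
  have key_le : ∀ j0 j1 j2 : Fin k, ∀ s t,
      (E j0 * E j1 * E j2) s t ≤ (S * E j1 * S) s t := by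
    intro j0 j1 j2 s t
    have h1 : ∀ b, (E j0 * E j1) s b ≤ (S * E j1) s b := by
      intro b
      rw [Matrix.mul_apply, Matrix.mul_apply]
      exact Finset.sum_le_sum fun a _ =>
        mul_le_mul_of_nonneg_right (hle j0 s a) (hE j1 a b)
    have h0 : ∀ b, 0 ≤ (E j0 * E j1) s b := by
      intro b
      rw [Matrix.mul_apply]
      exact Finset.sum_nonneg fun a _ => mul_nonneg (hE j0 s a) (hE j1 a b)
    rw [Matrix.mul_apply, Matrix.mul_apply]
    refine Finset.sum_le_sum fun b _ => ?_
    exact mul_le_mul (h1 b) (hle j2 b t) (hE j2 b t)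
      (le_trans (h0 b) (h1 b))
  by_cases hex : ∃ j : Fin k, E j = S
  · left
    refine ⟨hex, ?_⟩
    rintro ⟨c, hc0, hc1, hc⟩
    obtain ⟨j, hj⟩ := hex
    have h := hc j j j ⟨0, hd⟩ ⟨0, hd⟩
    rw [hj, hpow] at h
    have hp := hS3 ⟨0, hd⟩ ⟨0, hd⟩
    nlinarith
  · right
    constructor
    swap
    · exact hex
    -- strictness for each j
    have strict : ∀ j : Fin k, ∀ s t, (S * E j * S) s t < (S * S * S) s t := by
      intro j s t
      have hne : E j ≠ S := fun h => hex ⟨j, h⟩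
      have : ∃ p q, E j p q < S p q := by
        by_contra h
        push_neg at h
        exact hne (by ext p q; exact le_antisymm (hle j p q) (h p q))
      obtain ⟨p, q, hpq⟩ := this
      have hinner_le : ∀ b, (S * E j) s b ≤ (S * S) s b := by
        intro b
        rw [Matrix.mul_apply, Matrix.mul_apply]
        exact Finset.sum_le_sum fun a _ =>
          mul_le_mul_of_nonneg_left (hle j a b) (hSn s a)
      have hinner_lt : (S * E j) s q < (S * S) s q := by
        rw [Matrix.mul_apply, Matrix.mul_apply]
        refine Finset.sum_lt_sum (fun a _ =>
          mul_le_mul_of_nonneg_left (hle j a q) (hSn s a)) ?_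
        exact ⟨p, Finset.mem_univ p, mul_lt_mul_of_pos_left hpq (hpos s p)⟩
      rw [Matrix.mul_apply, Matrix.mul_apply]
      refine Finset.sum_lt_sum (fun b _ =>
        mul_le_mul_of_nonneg_right (hinner_le b) (hSn b t)) ?_
      exact ⟨q, Finset.mem_univ q, mul_lt_mul_of_pos_right hinner_lt (hpos q t)⟩
    -- ratios
    set r : Fin k × Fin d × Fin d → ℝ :=
      fun x => (S * E x.1 * S) x.2.1 x.2.2 / (S * S * S) x.2.1 x.2.2 with hrdef
    have hune : (Finset.univ : Finset (Fin k × Fin d × Fin d)).Nonempty :=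
      Finset.univ_nonempty
    set c0 : ℝ := Finset.univ.sup' hune r with hc0def
    have hr_lt1 : ∀ x, r x < 1 := by
      intro x
      exact (div_lt_one (hS3 x.2.1 x.2.2)).mpr (strict x.1 x.2.1 x.2.2)
    have hr_0 : ∀ x, 0 ≤ r x := fun x =>
      div_nonneg (htripn x.1 x.2.1 x.2.2) (hS3 x.2.1 x.2.2).le
    have hc0_lt1 : c0 < 1 :=
      (Finset.sup'_lt_iff hune).mpr fun x _ => hr_lt1 x
    have hc0_0 : 0 ≤ c0 :=
      le_trans (hr_0 hune.choose) (Finset.le_sup' r (Finset.mem_univ hune.choose))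
    refine ⟨(c0 + 1) / 2, by linarith, by linarith, ?_⟩
    intro j0 j1 j2 s t
    rw [hpow]
    calc (E j0 * E j1 * E j2) s t ≤ (S * E j1 * S) s t := key_le j0 j1 j2 s t
      _ = r ⟨j1, s, t⟩ * (S * S * S) s t := by
          rw [hrdef]
          exact (div_mul_cancel₀ _ (hS3 s t).ne').symm
      _ ≤ (c0 + 1) / 2 * (S * S * S) s t := by
          refine mul_le_mul_of_nonneg_right ?_ (hS3 s t).le
          have h1 : r ⟨j1, s, t⟩ ≤ c0 := Finset.le_sup' r (Finset.mem_univ _)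
          linarith
end

section
/- Let k ≥ 2 and let y ∈ [0,1] be a rational number. Then there exist an integer d ≥ 1, entrywise-nonnegative d×d real matrices A_0,…,A_{k−1}, and entrywise-nonnegative vectors u, v ∈ ℝ^d such that, setting f(n) := uᵀ A_{(n)_k} v for n ≥ 0, one has f(n) ≥ 0 for all n, Σ_f(N) > 0 for all N ≥ 0, and the probability measures μ_N converge weakly, as N → ∞, to the Dirac measure δ_y. -/
open Matrix Filter Topology MeasureTheory

/-- The matrix `A_{(n)_k} = A_{i_s} ⋯ A_{i_1} A_{i_0}`, where `i_s ⋯ i_1 i_0` is the base-`k`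
expansion of `n` (with `A_{(0)_k}` the identity matrix). -/
noncomputable def repMat {d : ℕ} (k : ℕ) (A : ℕ → Matrix (Fin d) (Fin d) ℝ) (n : ℕ) :
    Matrix (Fin d) (Fin d) ℝ :=
  ((Nat.digits k n).map A).foldl (fun acc M => M * acc) 1

/-- `Σ_f(N) = ∑_{m=k^N}^{k^{N+1}-1} f(m)`. -/
noncomputable def sigmaF (k : ℕ) (f : ℕ → ℝ) (N : ℕ) : ℝ :=
  ∑ m ∈ Finset.Ico (k ^ N) (k ^ (N + 1)), f m

/-- The ghost measure approximant
`μ_N = Σ_f(N)⁻¹ ∑_{m=0}^{k^{N+1}-k^N-1} f(k^N + m) δ_{m/(k^N (k-1))}`. -/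
noncomputable def ghostApprox (k : ℕ) (f : ℕ → ℝ) (N : ℕ) : Measure ℝ :=
  (ENNReal.ofReal (sigmaF k f N))⁻¹ •
    ∑ m ∈ Finset.range (k ^ (N + 1) - k ^ N),
      ENNReal.ofReal (f (k ^ N + m)) •
        Measure.dirac ((m : ℝ) / ((k : ℝ) ^ N * ((k : ℝ) - 1)))

/-!
The sequence is the indicator function of a single number `n_N` in each block `[k^N, k^(N+1))`,
so that `μ_N` is the Dirac mass at `(n_N - k^N) / (k^N (k - 1))`. Taking for the digits of `n_N`
the first `N + 1` base-`k` digits of `x = 1 + y (k - 1) ∈ [1, k]` makes these points converge to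
`y`. For rational `x = e / q` long division produces these digits by a deterministic automaton on
the finitely many states `t ∈ [0, k q]`, and the language of prefixes of the output of a
deterministic automaton has a linear representation by `0/1` matrices.
-/

lemma List.foldl_mul_left_eq_mul {M : Type*} [Monoid M] (l : List M) (x : M) :
    l.foldl (fun acc y => y * acc) x = l.foldl (fun acc y => y * acc) 1 * x := by
  induction l generalizing x with
  | nil => simp
  | cons y l ih => rw [List.foldl_cons, List.foldl_cons, ih, ih (y * 1), mul_one, mul_assoc]

section WordMatrix

variable {σ R : Type*} [Fintype σ] [DecidableEq σ] [Semiring R]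

def wordMat (A : ℕ → Matrix σ σ R) (l : List ℕ) : Matrix σ σ R :=
  (l.map A).foldl (fun acc M => M * acc) 1

lemma wordMat_cons (A : ℕ → Matrix σ σ R) (c : ℕ) (l : List ℕ) :
    wordMat A (c :: l) = wordMat A l * A c := by
  rw [wordMat, List.map_cons, List.foldl_cons, List.foldl_mul_left_eq_mul, mul_one, wordMat]

lemma repMat_eq_wordMat {d : ℕ} (k : ℕ) (A : ℕ → Matrix (Fin d) (Fin d) ℝ) (n : ℕ) :
    repMat k A n = wordMat A (Nat.digits k n) := rfl

end WordMatrix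

/-- Reversed so as to list digits least significant first, like `Nat.digits`. -/
def revPrefix (a : ℕ → ℕ) (m : ℕ) : List ℕ := ((List.range m).map a).reverse

lemma revPrefix_succ (a : ℕ → ℕ) (m : ℕ) : revPrefix a (m + 1) = a m :: revPrefix a m := by
  simp [revPrefix, List.range_succ]

lemma length_revPrefix (a : ℕ → ℕ) (m : ℕ) : (revPrefix a m).length = m := by
  simp [revPrefix]

lemma mem_revPrefix (a : ℕ → ℕ) {m l : ℕ} : l ∈ revPrefix a m ↔ ∃ j < m, a j = l := by
  simp [revPrefix]

lemma getLast_revPrefix (a : ℕ → ℕ) (m : ℕ) (h : revPrefix a (m + 1) ≠ []) :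
    (revPrefix a (m + 1)).getLast h = a 0 := by
  simp [revPrefix, List.getLast_reverse, List.head_map, List.head_range]

section Automaton

variable {σ R : Type*} [Fintype σ] [DecidableEq σ] [Semiring R] (next : σ → σ) (out : σ → ℕ)

def transitionMatrix (c : ℕ) : Matrix σ σ R :=
  Matrix.of fun s t => if next s = t ∧ out s = c then 1 else 0

def orbitDigits (s₀ : σ) (j : ℕ) : ℕ := out (next^[j] s₀)

lemma single_vecMul_transitionMatrix (s : σ) (c : ℕ) :
    Pi.single s 1 ᵥ* (transitionMatrix next out c : Matrix σ σ R) =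
      if out s = c then Pi.single (next s) 1 else 0 := by
  ext t
  by_cases hc : out s = c
  · simp [single_vecMul, transitionMatrix, Pi.single_apply, hc, eq_comm]
  · simp [single_vecMul, transitionMatrix, hc]

lemma single_vecMul_wordMat_transitionMatrix (s₀ : σ) (l : List ℕ) :
    Pi.single s₀ 1 ᵥ* wordMat (transitionMatrix next out : ℕ → Matrix σ σ R) l =
      if l = revPrefix (orbitDigits next out s₀) l.length then
        Pi.single (next^[l.length] s₀) 1 else 0 := by
  induction l with
  | nil => simp [wordMat, revPrefix]
  | cons c l ih =>
    rw [wordMat_cons, ← vecMul_vecMul, ih, List.length_cons, revPrefix_succ]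
    by_cases hl : l = revPrefix (orbitDigits next out s₀) l.length
    · rw [if_pos hl, single_vecMul_transitionMatrix, Function.iterate_succ_apply']
      simp only [List.cons.injEq, ← hl, and_true, orbitDigits, eq_comm (a := c)]
    · simp [hl]

lemma wordMat_transitionMatrix_weight (s₀ : σ) (l : List ℕ) :
    (Pi.single s₀ 1 ᵥ* wordMat (transitionMatrix next out : ℕ → Matrix σ σ R) l) ⬝ᵥ
        (fun _ => 1) = if l = revPrefix (orbitDigits next out s₀) l.length then 1 else 0 := by
  rw [single_vecMul_wordMat_transitionMatrix]
  split_ifs <;> simp [single_dotProduct]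

end Automaton

section DigitSequence

variable {k : ℕ} {a : ℕ → ℕ}

def prefixNum (k : ℕ) (a : ℕ → ℕ) (N : ℕ) : ℕ := Nat.ofDigits k (revPrefix a (N + 1))

lemma prefixNum_succ (k : ℕ) (a : ℕ → ℕ) (N : ℕ) :
    prefixNum k a (N + 1) = a (N + 1) + k * prefixNum k a N := by
  rw [prefixNum, revPrefix_succ, Nat.ofDigits_cons, prefixNum]

lemma length_digits_eq_succ_iff (hk : 1 < k) {n N : ℕ} :
    (Nat.digits k n).length = N + 1 ↔ n ∈ Finset.Ico (k ^ N) (k ^ (N + 1)) := by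
  rw [Finset.mem_Ico, ← Nat.lt_digits_length_iff hk, ← Nat.digits_length_le_iff hk]
  omega

variable (hk : 1 < k) (ha : ∀ j, a j < k) (ha₀ : a 0 ≠ 0)
include hk ha ha₀

lemma digits_prefixNum (N : ℕ) : Nat.digits k (prefixNum k a N) = revPrefix a (N + 1) := by
  refine Nat.digits_ofDigits k hk _ (fun l hl => ?_) (fun h => ?_)
  · obtain ⟨j, -, rfl⟩ := (mem_revPrefix a).1 hl
    exact ha j
  · rw [getLast_revPrefix]; exact ha₀

lemma prefixNum_mem_Ico (N : ℕ) : prefixNum k a N ∈ Finset.Ico (k ^ N) (k ^ (N + 1)) := by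
  rw [← length_digits_eq_succ_iff hk, digits_prefixNum hk ha ha₀, length_revPrefix]

lemma digits_eq_revPrefix_iff {n N : ℕ} (hn : n ∈ Finset.Ico (k ^ N) (k ^ (N + 1))) :
    Nat.digits k n = revPrefix a (Nat.digits k n).length ↔ n = prefixNum k a N := by
  rw [(length_digits_eq_succ_iff hk).2 hn]
  constructor
  · intro h; rw [← Nat.ofDigits_digits k n, h, prefixNum]
  · rintro rfl; exact digits_prefixNum hk ha ha₀ N

end DigitSequence

section GhostMeasure

variable {k : ℕ} {f : ℕ → ℝ} {N m : ℕ} (hm : m ∈ Finset.Ico (k ^ N) (k ^ (N + 1)))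
  (hf : ∀ n ∈ Finset.Ico (k ^ N) (k ^ (N + 1)), f n = if n = m then 1 else 0)
include hm hf

lemma sigmaF_eq_one_of_eq_ite : sigmaF k f N = 1 := by
  rw [sigmaF, Finset.sum_congr rfl hf, Finset.sum_ite_eq', if_pos hm]

lemma ghostApprox_eq_dirac_of_eq_ite :
    ghostApprox k f N = Measure.dirac (((m - k ^ N : ℕ) : ℝ) / ((k : ℝ) ^ N * ((k : ℝ) - 1))) := by
  rw [ghostApprox, sigmaF_eq_one_of_eq_ite hm hf, ENNReal.ofReal_one, inv_one, one_smul]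
  rw [Finset.mem_Ico] at hm
  have hterm : ∀ j ∈ Finset.range (k ^ (N + 1) - k ^ N),
      ENNReal.ofReal (f (k ^ N + j)) • Measure.dirac ((j : ℝ) / ((k : ℝ) ^ N * ((k : ℝ) - 1))) =
        if j = m - k ^ N then Measure.dirac ((j : ℝ) / ((k : ℝ) ^ N * ((k : ℝ) - 1))) else 0 := by
    intro j hj
    rw [Finset.mem_range] at hj
    rw [hf _ (Finset.mem_Ico.2 ⟨by omega, by omega⟩)]
    by_cases hjm : j = m - k ^ N
    · rw [if_pos (by omega), if_pos hjm, ENNReal.ofReal_one, one_smul]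
    · rw [if_neg (by omega), if_neg hjm, ENNReal.ofReal_zero, zero_smul]
  rw [Finset.sum_congr rfl hterm, Finset.sum_ite_eq', if_pos (Finset.mem_range.2 (by omega))]

end GhostMeasure

lemma eq_ite_prefixNum_of_transitionMatrix {d k : ℕ} (hk : 1 < k) {next : Fin d → Fin d}
    {out : Fin d → ℕ} {s₀ : Fin d} (ha : ∀ j, orbitDigits next out s₀ j < k)
    (ha₀ : orbitDigits next out s₀ 0 ≠ 0) {f : ℕ → ℝ}
    (hf : ∀ n, f n = Pi.single s₀ 1 ᵥ* repMat k (transitionMatrix next out) n ⬝ᵥ fun _ => 1)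
    {N n : ℕ} (hn : n ∈ Finset.Ico (k ^ N) (k ^ (N + 1))) :
    f n = if n = prefixNum k (orbitDigits next out s₀) N then 1 else 0 := by
  rw [hf, repMat_eq_wordMat, wordMat_transitionMatrix_weight,
    if_congr (digits_eq_revPrefix_iff hk ha ha₀ hn) rfl rfl]

lemma tendsto_div_of_mul_le_of_le_mul_add {m D : ℕ → ℝ} {c q : ℝ} (hq : 0 < q)
    (hD : Tendsto D atTop atTop) (hlo : ∀ N, q * m N ≤ c * D N)
    (hhi : ∀ N, c * D N ≤ q * m N + q) : Tendsto (fun N => m N / D N) atTop (𝓝 (c / q)) := by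
  have hlim : Tendsto (fun N => c / q - (D N)⁻¹) atTop (𝓝 (c / q)) := by
    simpa using tendsto_const_nhds.sub hD.inv_tendsto_atTop
  refine tendsto_of_tendsto_of_tendsto_of_le_of_le' hlim tendsto_const_nhds ?_ ?_ <;>
    filter_upwards [hD.eventually_gt_atTop 0] with N hN
  · rw [inv_eq_one_div, div_sub_div _ _ hq.ne' hN.ne', div_le_div_iff₀ (by positivity) hN]
    nlinarith [hhi N]
  · rw [div_le_div_iff₀ hN hq]
    linarith [hlo N]

lemma exists_nat_div_eq_of_rat_mem_Icc {y : ℝ} (hy : y ∈ Set.Icc (0 : ℝ) 1)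
    (hyQ : ∃ r : ℚ, (r : ℝ) = y) : ∃ c q : ℕ, 0 < q ∧ c ≤ q ∧ (c : ℝ) / q = y := by
  obtain ⟨r, rfl⟩ := hyQ
  have hnum : 0 ≤ r.num := Rat.num_nonneg.2 (by exact_mod_cast hy.1)
  have hval : ((r.num.toNat : ℕ) : ℝ) / r.den = r := by
    rw [Rat.cast_def, ← Int.cast_natCast, Int.toNat_of_nonneg hnum]
  refine ⟨r.num.toNat, r.den, r.den_pos, ?_, hval⟩
  have hle : ((r.num.toNat : ℕ) : ℝ) / r.den ≤ 1 := hval ▸ hy.2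
  exact_mod_cast (div_le_one (by exact_mod_cast r.den_pos)).1 hle

section Expansion

variable (k q : ℕ)

/-- Long division of `t / q ∈ [0, k]` in base `k`: state `t` emits the digit `expDigit k q t`
and moves to `k * expRem k q t`. Capping the digit at `k - 1` makes `t = k q` expand as
`(k-1).(k-1)(k-1)…`, so that the endpoint `y = 1` needs no separate construction. -/
def expDigit (t : ℕ) : ℕ := min (t / q) (k - 1)

def expRem (t : ℕ) : ℕ := t - q * expDigit k q t

lemma mul_expDigit_add_expRem (t : ℕ) : q * expDigit k q t + expRem k q t = t := by
  have : q * expDigit k q t ≤ t :=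
    (Nat.mul_le_mul_left q (min_le_left _ _)).trans (Nat.mul_div_le t q)
  rw [expRem]; omega

lemma expRem_le {t : ℕ} (ht : t ≤ k * q) : expRem k q t ≤ q := by
  rcases Nat.eq_zero_or_pos q with rfl | hq
  · simp [expRem, expDigit]; omega
  rw [expRem, expDigit]
  rcases le_total (t / q) (k - 1) with h | h
  · rw [min_eq_left h, ← Nat.mod_eq_sub_mul_div]; exact (Nat.mod_lt t hq).le
  · rw [min_eq_right h]
    rcases k with _ | k
    · simp at ht; omega
    · rw [Nat.add_sub_cancel, Nat.sub_le_iff_le_add]; linarith [Nat.succ_mul k q]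

lemma expDigit_lt (hk : 0 < k) (t : ℕ) : expDigit k q t < k :=
  (min_le_right _ _).trans_lt (Nat.sub_lt hk one_pos)

lemma expDigit_ne_zero (hk : 1 < k) (hq : 0 < q) {t : ℕ} (ht : q ≤ t) : expDigit k q t ≠ 0 := by
  have : 0 < t / q := Nat.div_pos ht hq
  rw [expDigit]; omega

def expNext (t : Fin (k * q + 1)) : Fin (k * q + 1) :=
  ⟨k * expRem k q t, Nat.lt_succ_of_le (Nat.mul_le_mul_left k
    ((expRem_le k q (Nat.le_of_lt_succ t.2)).trans_eq (by ring)))⟩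

end Expansion

section ExpansionOrbit

variable {k q : ℕ} (s₀ : Fin (k * q + 1))

lemma mul_pow_eq_prefixNum_expansion (N : ℕ) :
    s₀ * k ^ N = q * prefixNum k (orbitDigits (expNext k q) (fun t => expDigit k q t) s₀) N +
      expRem k q ((expNext k q)^[N] s₀) := by
  induction N with
  | zero => simp [prefixNum, revPrefix, orbitDigits, mul_expDigit_add_expRem]
  | succ N ih =>
    have hnext := mul_expDigit_add_expRem k q (expNext k q ((expNext k q)^[N] s₀))
    rw [prefixNum_succ, Function.iterate_succ_apply', pow_succ, ← mul_assoc, ih]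
    simp only [orbitDigits, Function.iterate_succ_apply'] at hnext ⊢
    rw [expNext] at hnext ⊢
    linarith

lemma tendsto_expansion_points (hk : 1 < k) (hq : 0 < q) {c : ℕ}
    (hs₀ : (s₀ : ℕ) = q + c * (k - 1)) :
    Tendsto (fun N => ((prefixNum k (orbitDigits (expNext k q) (fun t => expDigit k q t) s₀) N
      - k ^ N : ℕ) : ℝ) / ((k : ℝ) ^ N * ((k : ℝ) - 1))) atTop (𝓝 ((c : ℝ) / q)) := by
  set P := prefixNum k (orbitDigits (expNext k q) (fun t => expDigit k q t) s₀)
  have hPmem (N : ℕ) : P N ∈ Finset.Ico (k ^ N) (k ^ (N + 1)) :=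
    prefixNum_mem_Ico hk (fun j => expDigit_lt k q (by omega) _)
      (expDigit_ne_zero k q hk hq (by rw [Function.iterate_zero_apply, hs₀]; omega)) N
  have hrem (N : ℕ) := expRem_le k q (Nat.le_of_lt_succ ((expNext k q)^[N] s₀).2)
  have hgap (N : ℕ) :
      c * (k - 1) * k ^ N = q * (P N - k ^ N) + expRem k q ((expNext k q)^[N] s₀) := by
    have hexp : (q + c * (k - 1)) * k ^ N = q * P N + expRem k q ((expNext k q)^[N] s₀) :=
      hs₀ ▸ mul_pow_eq_prefixNum_expansion s₀ N
    have hPN := Nat.mul_le_mul_left q (Finset.mem_Ico.1 (hPmem N)).1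
    rw [add_mul] at hexp
    rw [Nat.mul_sub q (P N)]
    omega
  have hk' : (1 : ℝ) < k := by exact_mod_cast hk
  have hgapℝ (N : ℕ) : (c : ℝ) * ((k : ℝ) ^ N * ((k : ℝ) - 1)) =
      q * ((P N - k ^ N : ℕ) : ℝ) + (expRem k q ((expNext k q)^[N] s₀) : ℝ) := by
    have := congrArg (fun n : ℕ => (n : ℝ)) (hgap N)
    push_cast [Nat.cast_sub hk.le] at this
    linarith
  refine tendsto_div_of_mul_le_of_le_mul_add (by exact_mod_cast hq)
    ((tendsto_pow_atTop_atTop_of_one_lt hk').atTop_mul_const (sub_pos.2 hk')) (fun N => ?_)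
    (fun N => ?_) <;> rw [hgapℝ]
  · simp
  · have : (expRem k q ((expNext k q)^[N] s₀) : ℝ) ≤ q := by exact_mod_cast hrem N
    linarith

end ExpansionOrbit

/-- for every rational `y ∈ [0,1]` there is a `k`-regular sequence given by
nonnegative matrices and nonnegative vectors whose ghost measure approximants converge
weakly to the Dirac measure `δ_y`. -/
theorem stmt16 {k : ℕ} (hk : 2 ≤ k) (y : ℝ) (hy : y ∈ Set.Icc (0 : ℝ) 1)
    (hyQ : ∃ q : ℚ, (q : ℝ) = y) :
    ∃ d : ℕ, 1 ≤ d ∧ ∃ A : ℕ → Matrix (Fin d) (Fin d) ℝ, ∃ u v : Fin d → ℝ,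
      (∀ i : ℕ, i < k → ∀ s t, 0 ≤ A i s t) ∧ (∀ i, 0 ≤ u i) ∧ (∀ i, 0 ≤ v i) ∧
      ∀ f : ℕ → ℝ, (∀ n : ℕ, f n = Matrix.vecMul u (repMat k A n) ⬝ᵥ v) →
        (∀ n : ℕ, 0 ≤ f n) ∧ (∀ N : ℕ, 0 < sigmaF k f N) ∧
        ∀ g : BoundedContinuousFunction ℝ ℝ,
          Tendsto (fun N => ∫ x, g x ∂(ghostApprox k f N)) atTop
            (𝓝 (∫ x, g x ∂(Measure.dirac y))) := by
  obtain ⟨c, q, hq, hcq, rfl⟩ := exists_nat_div_eq_of_rat_mem_Icc hy hyQ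
  -- the automaton expands `1 + y (k - 1) = (q + c (k - 1)) / q ∈ [1, k]` in base `k`
  have hs₀ : q + c * (k - 1) < k * q + 1 := by
    have := Nat.mul_le_mul_right (k - 1) hcq
    obtain ⟨k, rfl⟩ : ∃ k', k = k' + 1 := ⟨k - 1, by omega⟩
    rw [Nat.add_sub_cancel] at this ⊢
    nlinarith
  set s₀ : Fin (k * q + 1) := ⟨q + c * (k - 1), hs₀⟩
  have ha (j : ℕ) : orbitDigits (expNext k q) (fun t => expDigit k q t) s₀ j < k :=
    expDigit_lt k q (by omega) _
  have ha₀ : orbitDigits (expNext k q) (fun t => expDigit k q t) s₀ 0 ≠ 0 :=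
    expDigit_ne_zero k q hk hq (Nat.le_add_right _ _)
  refine ⟨k * q + 1, by omega, transitionMatrix (expNext k q) (fun t => expDigit k q t),
    Pi.single s₀ 1, fun _ => 1, fun i _ s t => ?_, fun i => ?_, fun _ => zero_le_one,
    fun f hf => ?_⟩
  · simp only [transitionMatrix, of_apply]; split_ifs <;> norm_num
  · simp only [Pi.single_apply]; split_ifs <;> norm_num
  have hblock (N : ℕ) (n : ℕ) (hn : n ∈ Finset.Ico (k ^ N) (k ^ (N + 1))) :=
    eq_ite_prefixNum_of_transitionMatrix hk ha ha₀ hf hn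
  have hmem := prefixNum_mem_Ico hk ha ha₀
  refine ⟨fun n => ?_, fun N => ?_, fun g => ?_⟩
  · rw [hf, repMat_eq_wordMat, wordMat_transitionMatrix_weight]; split_ifs <;> norm_num
  · rw [sigmaF_eq_one_of_eq_ite (hmem N) (hblock N)]; exact one_pos
  · simp_rw [ghostApprox_eq_dirac_of_eq_ite (hmem _) (hblock _), integral_dirac]
    exact (g.continuous.tendsto _).comp (tendsto_expansion_points s₀ hk hq rfl)
end
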